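/- arXiv:1509.01273 — 9 statements merged into one kernel-verified Lean document; each statement's English description precedes it below -/
import Mathlib

section
/- Let X be a subshift over a finite alphabet A. If there exists n ∈ ℕ, n ≥ 1, such that F_X(n) ⊆ ⋃_{ℓ ≤ n−1} F_X(ℓ) (where ℓ ranges over 0, 1, …, n−1 and F_X(0) = {F_X(∅)}), then X is sofic, i.e., the collection {F_X(w) : w ∈ L(X)} of all follower sets of words of X is finite. -/
/-- The finite word `w` occurs in the biinfinite sequence `x` starting at position `i`. -/
def WordAt {A : Type*} (x : ℤ → A) (i : ℤ) (w : List A) : Prop :=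
  ∀ k : ℕ, (hk : k < w.length) → x (i + k) = w.get ⟨k, hk⟩

/-- A subshift: a closed, shift-invariant subset of `A^ℤ` (with the product topology,
`A` carrying the discrete topology). -/
def IsSubshift {A : Type*} [TopologicalSpace A] (X : Set (ℤ → A)) : Prop :=
  IsClosed X ∧ (fun x : ℤ → A => fun i => x (i + 1)) '' X = X

/-- `w` belongs to the language of `X`: `w` occurs in some point of `X`. -/
def InLang {A : Type*} (X : Set (ℤ → A)) (w : List A) : Prop :=
  ∃ x ∈ X, ∃ i : ℤ, WordAt x i w

/-- The follower set of the word `w` in `X`: all right-infinite sequences `s`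
such that `ws` occurs in some point of `X`. -/
def Follower {A : Type*} (X : Set (ℤ → A)) (w : List A) : Set (ℕ → A) :=
  {s | ∃ x ∈ X, ∃ i : ℤ, WordAt x i w ∧ ∀ k : ℕ, x (i + w.length + k) = s k}

/-- `F_X(n)`: the collection of follower sets of words of length `n` in `X`. -/
def FollowerSets {A : Type*} (X : Set (ℤ → A)) (n : ℕ) : Set (Set (ℕ → A)) :=
  {F | ∃ w : List A, w.length = n ∧ InLang X w ∧ Follower X w = F}

/-- A subshift is sofic iff it has only finitely many follower sets. -/
def Sofic {A : Type*} (X : Set (ℤ → A)) : Prop :=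
  {F | ∃ w : List A, InLang X w ∧ Follower X w = F}.Finite

namespace SoficAux

variable {A : Type*}

def consSeq (a : A) (s : ℕ → A) : ℕ → A
  | 0 => a
  | k + 1 => s k

lemma wordAt_prefix {x : ℤ → A} {i : ℤ} {u : List A} {a : A}
    (hw : WordAt x i (u ++ [a])) : WordAt x i u := by
  intro k hk
  have hk' : k < (u ++ [a]).length := by simp; omega
  have := hw k hk'
  rw [this]
  simp [List.get_eq_getElem, List.getElem_append_left hk]

lemma follower_concat (X : Set (ℤ → A)) (w : List A) (a : A) :
    Follower X (w ++ [a]) = {s | consSeq a s ∈ Follower X w} := by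
  ext s
  constructor
  · rintro ⟨x, hx, i, hw, hs⟩
    refine ⟨x, hx, i, wordAt_prefix hw, ?_⟩
    intro k
    cases k with
    | zero =>
      have hlen : w.length < (w ++ [a]).length := by simp
      have h0 := hw w.length hlen
      have : (w ++ [a]).get ⟨w.length, hlen⟩ = a := by
        simp [List.get_eq_getElem]
      rw [this] at h0
      simpa [consSeq] using h0
    | succ m =>
      have := hs m
      have harith : (i + ↑w.length + ↑(m + 1) : ℤ) = i + ↑(w ++ [a]).length + ↑m := by
        simp; push_cast; ring
      rw [harith]
      simpa [consSeq] using this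
  · rintro ⟨x, hx, i, hw, hs⟩
    refine ⟨x, hx, i, ?_, ?_⟩
    · intro k hk
      rcases Nat.lt_or_ge k w.length with hk2 | hk2
      · rw [hw k hk2]
        simp [List.get_eq_getElem, List.getElem_append_left hk2]
      · have hkeq : k = w.length := by simp at hk; omega
        subst hkeq
        have := hs 0
        simp [consSeq] at this
        rw [this]
        simp [List.get_eq_getElem]
    · intro k
      have := hs (k + 1)
      have harith : (i + ↑w.length + ↑(k + 1) : ℤ) = i + ↑(w ++ [a]).length + ↑k := by
        simp; push_cast; ring
      rw [harith] at this
      simpa [consSeq] using this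

lemma follower_nonempty {X : Set (ℤ → A)} {w : List A} (hw : InLang X w) :
    (Follower X w).Nonempty := by
  obtain ⟨x, hx, i, hxi⟩ := hw
  exact ⟨fun k => x (i + w.length + k), x, hx, i, hxi, fun k => rfl⟩

lemma inLang_of_follower_nonempty {X : Set (ℤ → A)} {w : List A}
    (hw : (Follower X w).Nonempty) : InLang X w := by
  obtain ⟨s, x, hx, i, hxi, _⟩ := hw
  exact ⟨x, hx, i, hxi⟩

lemma inLang_prefix {X : Set (ℤ → A)} {u : List A} {a : A}
    (hw : InLang X (u ++ [a])) : InLang X u := by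
  obtain ⟨x, hx, i, hxi⟩ := hw
  exact ⟨x, hx, i, wordAt_prefix hxi⟩

lemma key (X : Set (ℤ → A)) (n : ℕ) (hn : 1 ≤ n)
    (h : FollowerSets X n ⊆
      {Follower X ([] : List A)} ∪ ⋃ ℓ ∈ Finset.Ico 1 n, FollowerSets X ℓ) :
    ∀ m : ℕ, ∀ w : List A, w.length = m → InLang X w →
      ∃ v : List A, v.length < n ∧ Follower X v = Follower X w := by
  have hstep : ∀ w : List A, w.length = n → InLang X w →
      ∃ v : List A, v.length < n ∧ Follower X v = Follower X w := by
    intro w hwlen hw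
    have hmem : Follower X w ∈ FollowerSets X n := ⟨w, hwlen, hw, rfl⟩
    rcases h hmem with h1 | h2
    · exact ⟨[], hn, (Set.mem_singleton_iff.mp h1).symm⟩
    · simp only [Set.mem_iUnion] at h2
      obtain ⟨ℓ, hℓ, v, hvlen, _, hveq⟩ := h2
      simp only [Finset.mem_Ico] at hℓ
      exact ⟨v, by omega, hveq⟩
  intro m
  induction m using Nat.strong_induction_on with
  | _ m ih =>
  intro w hwlen hw
  rcases Nat.lt_or_ge m n with hlt | hge
  · exact ⟨w, hwlen ▸ hlt, rfl⟩
  rcases Nat.eq_or_lt_of_le hge with heq | hgt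
  · exact hstep w (hwlen.trans heq.symm) hw
  · have hne : w ≠ [] := by
      intro hnil; rw [hnil] at hwlen; simp at hwlen; omega
    obtain hnil | ⟨u, a, hw'⟩ := w.eq_nil_or_concat
    · exact absurd hnil hne
    rw [List.concat_eq_append] at hw'
    subst hw'
    have hulen : u.length = m - 1 := by
      simp at hwlen; omega
    obtain ⟨v, hvlen, hv⟩ := ih (m - 1) (by omega) u hulen (inLang_prefix hw)
    have heq2 : Follower X (v ++ [a]) = Follower X (u ++ [a]) := by
      rw [follower_concat, follower_concat, hv]
    have hvla : InLang X (v ++ [a]) :=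
      inLang_of_follower_nonempty (heq2 ▸ follower_nonempty hw)
    rcases Nat.lt_or_ge (v ++ [a]).length n with hlt2 | hge2
    · exact ⟨v ++ [a], hlt2, heq2⟩
    · have hlen2 : (v ++ [a]).length = n := by simp at hge2 ⊢; omega
      obtain ⟨v', hv'len, hv'⟩ := hstep (v ++ [a]) hlen2 hvla
      exact ⟨v', hv'len, hv'.trans heq2⟩

end SoficAux

/-- If for some `n ≥ 1` every follower set of a word of length `n` is a follower set
of a word of length `ℓ ≤ n - 1` (where `F_X(0) = {F_X(∅)}`), then `X` is sofic. -/
theorem sofic_of_followerSets_subset_union {A : Type*} [Fintype A] [TopologicalSpace A]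
    [DiscreteTopology A] (X : Set (ℤ → A)) (hX : IsSubshift X) (n : ℕ) (hn : 1 ≤ n)
    (h : FollowerSets X n ⊆
      {Follower X ([] : List A)} ∪ ⋃ ℓ ∈ Finset.Ico 1 n, FollowerSets X ℓ) :
    Sofic X := by
  have hfin : ({w : List A | w.length < n}).Finite := List.finite_length_lt A n
  apply Set.Finite.subset (hfin.image (Follower X))
  rintro F ⟨w, hw, rfl⟩
  obtain ⟨v, hvlen, hv⟩ := SoficAux.key X n hn h w.length w rfl hw
  exact ⟨v, hvlen, hv⟩
end

section
/- Let X be a subshift over a finite alphabet A and let n ∈ ℕ, n ≥ 1, be such that F_X(n) ⊆ ⋃_{ℓ ≤ n−1} F_X(ℓ). Then every word v ∈ L(X) of length at least n satisfies F_X(v) = F_X(v') for some word v' ∈ L(X) of length strictly less than n. -/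
def consSeq {A : Type*} (a : A) (s : ℕ → A) : ℕ → A
  | 0 => a
  | k+1 => s k

lemma follower_append {A : Type*} (X : Set (ℤ → A)) (u : List A) (a : A) :
    Follower X (u ++ [a]) = {s | consSeq a s ∈ Follower X u} := by
  ext s
  constructor
  · rintro ⟨x, hx, i, hw, hs⟩
    refine ⟨x, hx, i, ?_, ?_⟩
    · intro k hk
      have hk' : k < (u ++ [a]).length := by simp; omega
      have := hw k hk'
      simpa [List.get_eq_getElem, List.getElem_append_left hk] using this
    · intro k
      cases k with
      | zero =>
        have hk' : u.length < (u ++ [a]).length := by simp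
        have := hw u.length hk'
        simp only [List.get_eq_getElem, List.getElem_concat_length] at this
        simpa [consSeq] using this
      | succ k =>
        have := hs k
        have harg : i + ((u ++ [a]).length : ℤ) + k = i + u.length + (k + 1 : ℕ) := by
          simp; push_cast; ring
        rw [harg] at this
        simpa [consSeq] using this
  · rintro ⟨x, hx, i, hw, hs⟩
    refine ⟨x, hx, i, ?_, ?_⟩
    · intro k hk
      simp only [List.length_append, List.length_singleton] at hk
      rcases Nat.lt_or_ge k u.length with hku | hku
      · have := hw k hku
        simpa [List.get_eq_getElem, List.getElem_append_left hku] using this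
      · have hk0 : k = u.length := by omega
        subst hk0
        have := hs 0
        simp only [consSeq] at this
        simp only [List.get_eq_getElem, List.getElem_concat_length]
        simpa using this
    · intro k
      have := hs (k+1)
      have harg : i + (u.length : ℤ) + (k + 1 : ℕ) = i + ((u ++ [a]).length : ℤ) + k := by
        simp; push_cast; ring
      rw [harg] at this
      simpa [consSeq] using this

lemma follower_nonempty {A : Type*} {X : Set (ℤ → A)} {v : List A} (hv : InLang X v) :
    (Follower X v).Nonempty := by
  obtain ⟨x, hx, i, hw⟩ := hv
  exact ⟨fun k => x (i + v.length + k), x, hx, i, hw, fun k => rfl⟩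

lemma inLang_of_mem_follower {A : Type*} {X : Set (ℤ → A)} {v : List A} {s : ℕ → A}
    (hs : s ∈ Follower X v) : InLang X v := by
  obtain ⟨x, hx, i, hw, _⟩ := hs
  exact ⟨x, hx, i, hw⟩

lemma inLang_prefix {A : Type*} {X : Set (ℤ → A)} {u : List A} {a : A}
    (hv : InLang X (u ++ [a])) : InLang X u := by
  obtain ⟨x, hx, i, hw⟩ := hv
  refine ⟨x, hx, i, fun k hk => ?_⟩
  have hk' : k < (u ++ [a]).length := by simp; omega
  have := hw k hk'
  simpa [List.get_eq_getElem, List.getElem_append_left hk] using this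

/-- If for some `n ≥ 1` every follower set of a word of length `n` is a follower set
of a word of length `ℓ ≤ n - 1` (where `F_X(0) = {F_X(∅)}`), then every word
`v ∈ L(X)` of length at least `n` has the same follower set as some word in `L(X)`
of length strictly less than `n`. -/
theorem shortenable_of_followerSets_subset_union {A : Type*} [Fintype A] [TopologicalSpace A]
    [DiscreteTopology A] (X : Set (ℤ → A)) (hX : IsSubshift X) (n : ℕ) (hn : 1 ≤ n)
    (h : FollowerSets X n ⊆
      {Follower X ([] : List A)} ∪ ⋃ ℓ ∈ Finset.Ico 1 n, FollowerSets X ℓ) :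
    ∀ v : List A, InLang X v → n ≤ v.length →
      ∃ v' : List A, InLang X v' ∧ v'.length < n ∧ Follower X v = Follower X v' := by
  have hbase : ∀ w : List A, w.length = n → InLang X w →
      ∃ v' : List A, InLang X v' ∧ v'.length < n ∧ Follower X w = Follower X v' := by
    intro w hwn hw
    have hmem : Follower X w ∈ FollowerSets X n := ⟨w, hwn, hw, rfl⟩
    rcases h hmem with h0 | hU
    · obtain ⟨x, hx, _, _⟩ := hw
      refine ⟨[], ⟨x, hx, 0, fun k hk => absurd hk (by simp)⟩, by simp; omega, by simpa using h0⟩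
    · simp only [Set.mem_iUnion] at hU
      obtain ⟨ℓ, hℓ, w', hw'len, hw'lang, hw'F⟩ := hU
      simp only [Finset.mem_Ico] at hℓ
      exact ⟨w', hw'lang, by omega, hw'F.symm⟩
  suffices key : ∀ m, ∀ v : List A, v.length ≤ m → InLang X v → n ≤ v.length →
      ∃ v' : List A, InLang X v' ∧ v'.length < n ∧ Follower X v = Follower X v' by
    exact fun v hv hl => key v.length v le_rfl hv hl
  intro m
  induction m with
  | zero => intro v hle _ hl; omega
  | succ m ih =>
    intro v hle hv hl
    rcases eq_or_lt_of_le hl with heq | hlt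
    · exact hbase v heq.symm hv
    · have hne : v ≠ [] := by
        intro e; rw [e] at hl; simp at hl; omega
      set a := v.getLast hne with ha
      set u := v.dropLast with hu
      have hv_eq : v = u ++ [a] := (List.dropLast_append_getLast hne).symm
      have hulen : u.length = v.length - 1 := by
        rw [hu, List.length_dropLast]
      have hulang : InLang X u := inLang_prefix (hv_eq ▸ hv)
      obtain ⟨v', hv'lang, hv'len, hv'F⟩ := ih u (by omega) hulang (by omega)
      have hF : Follower X v = Follower X (v' ++ [a]) := by
        rw [hv_eq, follower_append, follower_append, hv'F]
      have hwlang : InLang X (v' ++ [a]) := by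
        obtain ⟨s, hs⟩ := follower_nonempty hv
        rw [hF] at hs
        exact inLang_of_mem_follower hs
      rcases Nat.lt_or_ge (v'.length + 1) n with hlt' | hge'
      · exact ⟨v' ++ [a], hwlang, by simpa using hlt', hF⟩
      · have hwn : (v' ++ [a]).length = n := by simp; omega
        obtain ⟨v'', hv''lang, hv''len, hv''F⟩ := hbase (v' ++ [a]) hwn hwlang
        exact ⟨v'', hv''lang, hv''len, hF.trans hv''F⟩
end

section
/- Let X be a subshift over a finite alphabet A such that every letter of A appears in some point of X. If there exists n ∈ ℕ, n ≥ 1, for which |F_X(n)| = 1, then X is the full shift A^ℤ. -/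
namespace FullShiftAux

variable {A : Type*}

/-- The word of length `n` read from `x` starting at position `i`. -/
def win (x : ℤ → A) (i : ℤ) (n : ℕ) : List A := List.ofFn (fun k : Fin n => x (i + k))

lemma win_length (x : ℤ → A) (i : ℤ) (n : ℕ) : (win x i n).length = n :=
  List.length_ofFn

lemma win_get (x : ℤ → A) (i : ℤ) (n k : ℕ) (hk : k < (win x i n).length) :
    (win x i n).get ⟨k, hk⟩ = x (i + k) := by
  simp [win, List.get_ofFn]

lemma wordAt_win (x : ℤ → A) (i : ℤ) (n : ℕ) : WordAt x i (win x i n) := by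
  intro k hk
  rw [win_get]

lemma inLang_win {X : Set (ℤ → A)} {x : ℤ → A} (hx : x ∈ X) (i : ℤ) (n : ℕ) :
    InLang X (win x i n) :=
  ⟨x, hx, i, wordAt_win x i n⟩

lemma tail_mem_follower {X : Set (ℤ → A)} {x : ℤ → A} (hx : x ∈ X) (i : ℤ) (n : ℕ) :
    (fun k : ℕ => x (i + n + k)) ∈ Follower X (win x i n) :=
  ⟨x, hx, i, wordAt_win x i n, fun k => by rw [win_length]⟩

section Topo

variable [TopologicalSpace A] {X : Set (ℤ → A)}

lemma shift1 (hX : IsSubshift X) {x : ℤ → A} (hx : x ∈ X) :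
    (fun i => x (i + 1)) ∈ X := by
  rw [← hX.2]; exact ⟨x, hx, rfl⟩

lemma shift_neg1 (hX : IsSubshift X) {x : ℤ → A} (hx : x ∈ X) :
    (fun i => x (i - 1)) ∈ X := by
  have hmem : x ∈ (fun y : ℤ → A => fun i => y (i + 1)) '' X := by rw [hX.2]; exact hx
  obtain ⟨z, hz, hzx⟩ := hmem
  have : (fun i : ℤ => x (i - 1)) = z := by
    funext i
    have h2 := congrFun hzx (i - 1)
    simp only at h2
    rw [← h2]
    congr 1
    ring
  rw [this]; exact hz

lemma shift_mem (hX : IsSubshift X) (t : ℤ) {x : ℤ → A} (hx : x ∈ X) :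
    (fun i => x (i + t)) ∈ X := by
  induction t using Int.induction_on with
  | zero => simpa using hx
  | succ k ih =>
    have := shift1 hX ih
    convert this using 1
    funext i
    show x (i + (↑k + 1)) = x (i + 1 + ↑k)
    congr 1; ring
  | pred k ih =>
    have := shift_neg1 hX ih
    convert this using 1
    funext i
    show x (i + (-↑k - 1)) = x (i - 1 + -↑k)
    congr 1; ring

end Topo

/-- Prepend a letter to an infinite sequence. -/
def Cons (a : A) (s : ℕ → A) : ℕ → A := fun k =>
  match k with
  | 0 => a
  | (k + 1) => s k

/-- Prepend a finite word to an infinite sequence. -/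
def App : List A → (ℕ → A) → ℕ → A
  | [], s => s
  | a :: v, s => Cons a (App v s)

lemma app_eq_get : ∀ (v : List A) (s : ℕ → A) (k : ℕ) (hk : k < v.length),
    App v s k = v.get ⟨k, hk⟩
  | _ :: _, _, 0, _ => rfl
  | _ :: v, s, (k + 1), hk => app_eq_get v s k (by simpa using hk)

end FullShiftAux

open FullShiftAux

/-- If every letter appears in a point of `X` and `|F_X(n)| = 1` for some `n ≥ 1`,
then `X` is the full shift. -/
theorem full_shift_of_one_followerSet {A : Type*} [Fintype A] [TopologicalSpace A]
    [DiscreteTopology A] (X : Set (ℤ → A)) (hX : IsSubshift X)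
    (hA : ∀ a : A, InLang X [a]) (n : ℕ) (hn : 1 ≤ n)
    (h : (FollowerSets X n).ncard = 1) :
    X = Set.univ := by
  obtain ⟨F, hFeq⟩ := Set.ncard_eq_one.mp h
  have hF : ∀ w : List A, w.length = n → InLang X w → Follower X w = F := by
    intro w h1 h2
    have hmem : Follower X w ∈ FollowerSets X n := ⟨w, h1, h2, rfl⟩
    rw [hFeq] at hmem
    exact hmem
  have hFwin : ∀ x ∈ X, ∀ i : ℤ, Follower X (win x i n) = F := fun x hx i =>
    hF _ (win_length x i n) (inLang_win hx i n)
  -- F is closed under prepending any letter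
  have hCons : ∀ a : A, ∀ s ∈ F, Cons a s ∈ F := by
    intro a s hs
    obtain ⟨y, hy, j, hya⟩ := hA a
    have hyj : y j = a := by
      have h0 := hya 0 (by simp)
      simpa using h0
    have hsw : s ∈ Follower X (win y (j + 1 - n) n) := by
      rw [hFwin y hy (j + 1 - n)]; exact hs
    obtain ⟨x, hx, i, hw, hsk⟩ := hsw
    have ht : (fun k : ℕ => x (i - 1 + n + k)) ∈ F := by
      rw [← hFwin x hx (i - 1)]; exact tail_mem_follower hx (i - 1) n
    have hx_last : x (i - 1 + n) = a := by
      have h1 : n - 1 < (win y (j + 1 - n) n).length := by rw [win_length]; omega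
      have h2 := hw (n - 1) h1
      rw [win_get] at h2
      have e1 : i + ((n - 1 : ℕ) : ℤ) = i - 1 + n := by omega
      have e2 : j + 1 - n + ((n - 1 : ℕ) : ℤ) = j := by omega
      rw [e1, e2] at h2
      rw [h2, hyj]
    have heq : Cons a s = fun k : ℕ => x (i - 1 + n + k) := by
      funext k
      cases k with
      | zero =>
        show a = x (i - 1 + ↑n + (0 : ℕ))
        rw [← hx_last]
        congr 1; push_cast; ring
      | succ k =>
        show s k = x (i - 1 + ↑n + ((k : ℕ) + 1 : ℕ))
        have h3 := hsk k
        rw [win_length] at h3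
        rw [← h3]
        congr 1; push_cast; ring
    rw [heq]; exact ht
  have hApp : ∀ v : List A, ∀ s ∈ F, App v s ∈ F := by
    intro v
    induction v with
    | nil => intro s hs; exact hs
    | cons a v ih => intro s hs; exact hCons a _ (ih s hs)
  -- some base point
  have hFmem : F ∈ FollowerSets X n := by rw [hFeq]; exact rfl
  obtain ⟨w0, hw0len, hw0lang, hw0fol⟩ := hFmem
  obtain ⟨x0, hx0, i0, _⟩ := hw0lang
  have hs0 : (fun k : ℕ => x0 (i0 + n + k)) ∈ F := by
    rw [← hFwin x0 hx0 i0]; exact tail_mem_follower hx0 i0 n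
  -- every word is in the language
  have hLang : ∀ v : List A, InLang X v := by
    intro v
    have hv : App v (fun k : ℕ => x0 (i0 + n + k)) ∈ Follower X w0 := by
      rw [hw0fol]; exact hApp v _ hs0
    obtain ⟨z, hz, iz, _, hzk⟩ := hv
    refine ⟨z, hz, iz + w0.length, ?_⟩
    intro k hk
    have := hzk k
    rw [this]
    exact app_eq_get v _ k hk
  -- conclude via closedness
  ext x
  simp only [Set.mem_univ, iff_true]
  rw [← hX.1.closure_eq]
  rw [mem_closure_iff_nhds]
  intro t ht
  rw [nhds_pi, Filter.mem_pi] at ht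
  obtain ⟨I, hIfin, V, hV, hVt⟩ := ht
  have hxV : ∀ i, x i ∈ V i := fun i => mem_of_mem_nhds (hV i)
  have hbound : ∃ m : ℕ, ∀ i ∈ I, i.natAbs ≤ m := by
    obtain ⟨u, hu⟩ := (hIfin.image Int.natAbs).bddAbove
    exact ⟨u, fun i hi => hu (Set.mem_image_of_mem _ hi)⟩
  obtain ⟨m, hm⟩ := hbound
  obtain ⟨z, hz, iz, hwz⟩ := hLang (win x (-(m : ℤ)) (2 * m + 1))
  have hyX : (fun j : ℤ => z (j + (iz + m))) ∈ X := shift_mem hX (iz + m) hz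
  have hagree : ∀ j : ℤ, -(m : ℤ) ≤ j → j ≤ m → z (j + (iz + m)) = x j := by
    intro j h1 h2
    have hk : (j + m).toNat < (win x (-(m : ℤ)) (2 * m + 1)).length := by
      rw [win_length]; omega
    have h3 := hwz (j + m).toNat hk
    rw [win_get] at h3
    have e : (((j + m).toNat : ℕ) : ℤ) = j + m := Int.toNat_of_nonneg (by omega)
    rw [e] at h3
    rw [show j + (iz + (m : ℤ)) = iz + (j + m) by ring, h3]
    congr 1; ring
  refine ⟨fun j : ℤ => z (j + (iz + m)), hVt ?_, hyX⟩
  intro i hi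
  have hib := hm i hi
  have : z (i + (iz + m)) = x i := hagree i (by omega) (by omega)
  show z (i + (iz + m)) ∈ V i
  rw [this]
  exact hxV i
end

section
/- Let X be a subshift over a finite alphabet A which is not sofic, i.e., the collection {F_X(w) : w ∈ L(X)} of all follower sets is infinite. Then for every n ∈ ℕ, n ≥ 1, the union ⋃_{1 ≤ ℓ ≤ n} F_X(ℓ) has cardinality at least n + 1. -/
namespace SubshiftAux

variable {A : Type*} {X : Set (ℤ → A)}

def app (w : List A) (s : ℕ → A) : ℕ → A := fun k =>
  if h : k < w.length then w[k] else s (k - w.length)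

lemma app_lt (w : List A) (s : ℕ → A) {k : ℕ} (h : k < w.length) : app w s k = w[k] :=
  dif_pos h

lemma app_ge (w : List A) (s : ℕ → A) {k : ℕ} (h : w.length ≤ k) :
    app w s k = s (k - w.length) := dif_neg (by omega)

lemma follower_append (w v : List A) (s : ℕ → A) :
    s ∈ Follower X (w ++ v) ↔ app v s ∈ Follower X w := by
  constructor
  · rintro ⟨x, hx, i, hw, hs⟩
    refine ⟨x, hx, i, ?_, ?_⟩
    · intro k hk
      have h := hw k (by simp; omega)
      rw [h]
      simp only [List.get_eq_getElem]
      exact List.getElem_append_left hk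
    · intro k
      by_cases h : k < v.length
      · rw [app_lt v s h]
        have e : i + (w.length : ℤ) + k = i + ((w.length + k : ℕ) : ℤ) := by push_cast; ring
        have h2 := hw (w.length + k) (by simp; omega)
        rw [e, h2]
        simp only [List.get_eq_getElem]
        rw [List.getElem_append_right (by omega)]
        congr 1
        omega
      · rw [app_ge v s (by omega)]
        have e : i + (w.length : ℤ) + k
            = i + ((w ++ v).length : ℤ) + ((k - v.length : ℕ) : ℤ) := by
          simp only [List.length_append]; push_cast; omega
        rw [e, hs]
  · rintro ⟨x, hx, i, hw, hs⟩
    refine ⟨x, hx, i, ?_, ?_⟩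
    · intro k hk
      simp only [List.length_append] at hk
      by_cases h : k < w.length
      · rw [hw k h]
        simp only [List.get_eq_getElem]
        exact (List.getElem_append_left h).symm
      · have e : i + (k : ℤ) = i + (w.length : ℤ) + ((k - w.length : ℕ) : ℤ) := by
          push_cast; omega
        rw [e, hs]
        rw [app_lt v s (by omega)]
        simp only [List.get_eq_getElem]
        rw [List.getElem_append_right (by omega)]
    · intro k
      have e : i + ((w ++ v).length : ℤ) + k = i + (w.length : ℤ) + ((v.length + k : ℕ) : ℤ) := by
        simp only [List.length_append]; push_cast; ring
      rw [e, hs]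
      rw [app_ge v s (by omega)]
      congr 1
      omega

lemma inLang_iff (w : List A) : InLang X w ↔ (Follower X w).Nonempty := by
  constructor
  · rintro ⟨x, hx, i, hw⟩
    exact ⟨fun k => x (i + w.length + k), x, hx, i, hw, fun k => rfl⟩
  · rintro ⟨s, x, hx, i, hw, -⟩
    exact ⟨x, hx, i, hw⟩

lemma inLang_prefix {w v : List A} (h : InLang X (w ++ v)) : InLang X w := by
  obtain ⟨x, hx, i, hw⟩ := h
  refine ⟨x, hx, i, fun k hk => ?_⟩
  rw [hw k (by simp; omega)]
  simp only [List.get_eq_getElem]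
  exact List.getElem_append_left hk

lemma inLang_tail {a : A} {u : List A} (h : InLang X (a :: u)) : InLang X u := by
  obtain ⟨x, hx, i, hw⟩ := h
  refine ⟨x, hx, i + 1, fun k hk => ?_⟩
  have h2 := hw (k + 1) (by simp; omega)
  have e : i + 1 + (k : ℤ) = i + ((k + 1 : ℕ) : ℤ) := by push_cast; ring
  rw [e, h2]
  simp [List.get_eq_getElem]

lemma follower_congr_append {w u : List A} (v : List A) (h : Follower X w = Follower X u) :
    Follower X (w ++ v) = Follower X (u ++ v) := by
  ext s
  rw [follower_append, follower_append, h]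

end SubshiftAux


namespace SubshiftAux

variable {A : Type*} {X : Set (ℤ → A)}

/-- union of follower set collections for lengths 1..n -/
def V (X : Set (ℤ → A)) (n : ℕ) : Set (Set (ℕ → A)) :=
  ⋃ ℓ ∈ Finset.Icc 1 n, FollowerSets X ℓ

lemma mem_V {n ℓ : ℕ} (h1 : 1 ≤ ℓ) (h2 : ℓ ≤ n) {F : Set (ℕ → A)}
    (hF : F ∈ FollowerSets X ℓ) : F ∈ V X n :=
  Set.mem_iUnion₂.mpr ⟨ℓ, Finset.mem_Icc.mpr ⟨h1, h2⟩, hF⟩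

lemma followerSets_finite [Finite A] (j : ℕ) : (FollowerSets X j).Finite := by
  apply Set.Finite.subset (Set.Finite.image (Follower X) (List.finite_length_eq A j))
  rintro F ⟨w, hw, -, rfl⟩
  exact ⟨w, hw, rfl⟩

lemma V_finite [Finite A] (n : ℕ) : (V X n).Finite :=
  Set.Finite.biUnion (Finset.finite_toSet _) fun j _ => followerSets_finite j

lemma V_mono {m n : ℕ} (h : m ≤ n) : V X m ⊆ V X n := by
  intro F hF
  obtain ⟨j, hj, hFj⟩ := Set.mem_iUnion₂.mp hF
  rw [Finset.mem_Icc] at hj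
  exact mem_V hj.1 (hj.2.trans h) hFj

lemma sofic_of_subset (S : Set (Set (ℕ → A))) (hS : S.Finite)
    (h : ∀ w : List A, w ≠ [] → InLang X w → Follower X w ∈ S) : Sofic X := by
  apply Set.Finite.subset (hS.union (Set.finite_singleton (Follower X ([] : List A))))
  rintro F ⟨w, hw, rfl⟩
  rcases eq_or_ne w [] with rfl | hne
  · exact Or.inr rfl
  · exact Or.inl (h w hne hw)

/-- collapse: if all letters in the language share follower set F₀, every nonempty word does -/
lemma collapse (F₀ : Set (ℕ → A)) (h1 : ∀ a : A, InLang X [a] → Follower X [a] = F₀) :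
    ∀ w : List A, w ≠ [] → InLang X w → Follower X w = F₀ := by
  intro w
  induction w with
  | nil => intro h; exact absurd rfl h
  | cons a u ih =>
    intro _ hw
    rcases eq_or_ne u [] with rfl | hu
    · exact h1 a hw
    · have huL : InLang X u := inLang_tail hw
      have haL : InLang X [a] := by
        have : InLang X ([a] ++ u) := hw
        exact inLang_prefix this
      rw [← ih hu huL]
      ext s
      have : (a :: u) = [a] ++ u := rfl
      rw [this, follower_append]
      constructor
      · rintro ⟨x, hx, i, hwa, hs⟩
        -- [a] occurs at i, then app u s afterwards; extract u then s
        refine ⟨x, hx, i + 1, fun k hk => ?_, fun k => ?_⟩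
        · have := hs k
          rw [app_lt u s hk] at this
          simp only [List.length_singleton] at this
          have e : i + 1 + (k : ℤ) = i + (1 : ℕ) + (k : ℤ) := by push_cast; ring
          rw [e, this]
          simp [List.get_eq_getElem]
        · have := hs (u.length + k)
          rw [app_ge u s (by omega)] at this
          simp only [List.length_singleton] at this
          have e : i + 1 + (u.length : ℤ) + k = i + (1 : ℕ) + ((u.length + k : ℕ) : ℤ) := by
            push_cast; ring
          rw [e, this]
          congr 1
          omega
      · rintro ⟨x, hx, i, hwu, hs⟩
        -- u occurs at i with tail s; the letter b := x (i-1) precedes it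
        set b := x (i - 1) with hb
        have hbL : InLang X [b] := by
          refine ⟨x, hx, i - 1, fun k hk => ?_⟩
          simp only [List.length_singleton] at hk
          interval_cases k
          show x (i - 1 + ((0 : ℕ) : ℤ)) = b
          norm_num
          exact hb.symm
        have : app u s ∈ Follower X [b] := by
          refine ⟨x, hx, i - 1, fun k hk => ?_, fun k => ?_⟩
          · simp only [List.length_singleton] at hk
            interval_cases k
            show x (i - 1 + ((0 : ℕ) : ℤ)) = b
            norm_num
            exact hb.symm
          · simp only [List.length_singleton]
            by_cases h : k < u.length
            · rw [app_lt u s h]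
              have e : i - 1 + (1 : ℕ) + (k : ℤ) = i + k := by push_cast; ring
              rw [e]
              exact hwu k h
            · rw [app_ge u s (by omega)]
              have e : i - 1 + (1 : ℕ) + (k : ℤ)
                  = i + (u.length : ℤ) + ((k - u.length : ℕ) : ℤ) := by push_cast; omega
              rw [e]
              exact hs _
        rw [h1 b hbL, ← h1 a haL] at this
        exact this

end SubshiftAux

namespace SubshiftAux

variable {A : Type*} {X : Set (ℤ → A)}

lemma stabilize (ℓ : ℕ) (h : FollowerSets X (ℓ + 1) ⊆ V X ℓ) :
    ∀ m : ℕ, ∀ w : List A, w.length = m → w ≠ [] → InLang X w → Follower X w ∈ V X ℓ := by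
  intro m
  induction m using Nat.strong_induction_on with
  | _ m ih =>
    intro w hlen hne hw
    have hm : 1 ≤ m := by have := List.length_pos_iff.mpr hne; omega
    by_cases hcase : m ≤ ℓ
    · exact mem_V hm hcase ⟨w, hlen, hw, rfl⟩
    by_cases hcase2 : m = ℓ + 1
    · exact h ⟨w, by omega, hw, rfl⟩
    · obtain ⟨w', a, rfl⟩ : ∃ w' a, w = w' ++ [a] :=
        ⟨w.dropLast, w.getLast hne, (w.dropLast_append_getLast hne).symm⟩
      have hlen0 : w'.length + 1 = m := by simpa using hlen
      have hw' : InLang X w' := inLang_prefix hw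
      have hne' : w' ≠ [] := by
        intro e
        rw [e] at hlen0
        simp at hlen0
        omega
      have hmem := ih (m - 1) (by omega) w' (by omega) hne' hw'
      obtain ⟨j, hj, hmem⟩ := Set.mem_iUnion₂.mp hmem
      rw [Finset.mem_Icc] at hj
      obtain ⟨u, hul, huL, hue⟩ := hmem
      have key : Follower X (u ++ [a]) = Follower X (w' ++ [a]) :=
        follower_congr_append [a] hue
      have huaL : InLang X (u ++ [a]) := by
        rw [inLang_iff, key, ← inLang_iff]
        exact hw
      have hFS : Follower X (w' ++ [a]) ∈ FollowerSets X (j + 1) :=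
        ⟨u ++ [a], by simp [hul], huaL, key⟩
      by_cases hjc : j + 1 ≤ ℓ
      · exact mem_V (by omega) hjc hFS
      · have : j + 1 = ℓ + 1 := by omega
        rw [this] at hFS
        exact h hFS

theorem main [Finite A] (hnot : ¬ Sofic X) :
    ∀ n : ℕ, 1 ≤ n → n + 1 ≤ (⋃ ℓ ∈ Finset.Icc 1 n, FollowerSets X ℓ).ncard := by
  intro n hn
  by_contra hcon
  have hcon' : (V X n).ncard ≤ n := by
    rw [not_le] at hcon
    exact Nat.lt_succ_iff.mp hcon
  by_cases hstab : ∃ ℓ : ℕ, FollowerSets X (ℓ + 1) ⊆ V X ℓ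
  · obtain ⟨ℓ, h⟩ := hstab
    exact hnot (sofic_of_subset (V X ℓ) (V_finite ℓ)
      (fun w hne hw => stabilize ℓ h w.length w rfl hne hw))
  push_neg at hstab
  have hbase : 2 ≤ (V X 1).ncard := by
    by_contra hb
    have h1 : (V X 1).ncard ≤ 1 := by omega
    rcases (Set.ncard_le_one_iff_eq (V_finite 1)).mp h1 with he | ⟨F₀, hF⟩
    · apply hnot
      have hXe : X = ∅ := by
        by_contra hne
        obtain ⟨x, hx⟩ := Set.nonempty_iff_ne_empty.mpr hne
        have hword : WordAt x 0 [x 0] := by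
          intro k hk
          simp only [List.length_singleton] at hk
          interval_cases k
          show x (0 + ((0 : ℕ) : ℤ)) = x 0
          norm_num
        have : Follower X [x 0] ∈ V X 1 :=
          mem_V le_rfl le_rfl ⟨[x 0], rfl, ⟨x, hx, 0, hword⟩, rfl⟩
        rw [he] at this
        exact this
      have hempty : {F | ∃ w : List A, InLang X w ∧ Follower X w = F} = ∅ := by
        ext F
        simp only [Set.mem_setOf_eq, Set.mem_empty_iff_false, iff_false]
        rintro ⟨w, ⟨x, hx, -⟩, -⟩
        rw [hXe] at hx
        exact hx
      show Sofic X
      rw [Sofic, hempty]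
      exact Set.finite_empty
    · apply hnot
      apply sofic_of_subset {F₀} (Set.finite_singleton _)
      intro w hne hw
      have hall : ∀ a : A, InLang X [a] → Follower X [a] = F₀ := by
        intro a ha
        have : Follower X [a] ∈ V X 1 := mem_V le_rfl le_rfl ⟨[a], rfl, ha, rfl⟩
        rw [hF] at this
        exact this
      have := collapse F₀ hall w hne hw
      simp [this]
  have hstep : ∀ ℓ : ℕ, 1 ≤ ℓ → ℓ ≤ n → ℓ + 1 ≤ (V X ℓ).ncard := by
    intro ℓ
    induction ℓ with
    | zero => omega
    | succ p ih =>
      intro _ hle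
      rcases Nat.eq_zero_or_pos p with rfl | hp
      · simpa using hbase
      · have hih := ih hp (by omega)
        have hsub : V X p ⊆ V X (p + 1) := V_mono (by omega)
        have hne : V X p ≠ V X (p + 1) := by
          intro he
          apply hstab p
          intro F hF
          have : F ∈ V X (p + 1) := mem_V (by omega) le_rfl hF
          rwa [← he] at this
        have := Set.ncard_lt_ncard (Set.ssubset_iff_subset_ne.mpr ⟨hsub, hne⟩) (V_finite (p + 1))
        omega
  have := hstep n hn le_rfl
  omega

end SubshiftAux


/-- If `X` is not sofic, then for every `n ≥ 1` the union `⋃_{1 ≤ ℓ ≤ n} F_X(ℓ)`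
has at least `n + 1` elements. -/
theorem union_followerSets_card_ge_of_not_sofic {A : Type*} [Fintype A] [TopologicalSpace A]
    [DiscreteTopology A] (X : Set (ℤ → A)) (hX : IsSubshift X) (hnot : ¬ Sofic X) :
    ∀ n : ℕ, 1 ≤ n → n + 1 ≤ (⋃ ℓ ∈ Finset.Icc 1 n, FollowerSets X ℓ).ncard :=
  fun n hn => SubshiftAux.main hnot n hn
end

section
/- Let X be a subshift over a finite alphabet A. If there exists a non-empty word w ∈ L(X) such that F_X(w) = F_X(∅), and there exists n ∈ ℕ, n ≥ 1, such that |F_X(n)| ≤ n, then X is sofic, i.e., the collection {F_X(w) : w ∈ L(X)} of all follower sets of words of X is finite. -/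
section Aux
variable {A : Type*} {X : Set (ℤ → A)}

lemma wordAt_append {x : ℤ → A} {i : ℤ} {u v : List A} :
    WordAt x i (u ++ v) ↔ WordAt x i u ∧ WordAt x (i + u.length) v := by
  constructor
  · intro h
    refine ⟨fun k hk => ?_, fun k hk => ?_⟩
    · have hk' : k < (u ++ v).length := by simp; omega
      have := h k hk'
      simpa [List.getElem_append_left hk] using this
    · have hk' : u.length + k < (u ++ v).length := by simp; omega
      have := h (u.length + k) hk'
      have harg : i + ↑(u.length + k) = i + ↑u.length + ↑k := by push_cast; ring
      rw [harg] at this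
      simpa [List.getElem_append_right (Nat.le_add_right _ _)] using this
  · rintro ⟨h1, h2⟩ k hk
    rcases Nat.lt_or_ge k u.length with hlt | hge
    · simpa [List.getElem_append_left hlt] using h1 k hlt
    · have hk2 : k - u.length < v.length := by simp at hk; omega
      have := h2 (k - u.length) hk2
      have harg : i + ↑u.length + ↑(k - u.length) = i + ↑k := by
        push_cast [Nat.cast_sub hge]; ring
      rw [harg] at this
      simpa [List.getElem_append_right hge] using this

/-- Tail rewrite: follower membership, append version. -/
lemma mem_follower_append {s : ℕ → A} {u v : List A} :
    s ∈ Follower X (u ++ v) ↔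
      ∃ x ∈ X, ∃ i : ℤ, (WordAt x i u ∧ WordAt x (i + u.length) v) ∧
        ∀ k : ℕ, x (i + u.length + v.length + k) = s k := by
  unfold Follower
  constructor
  · rintro ⟨x, hx, i, hword, htail⟩
    refine ⟨x, hx, i, wordAt_append.mp hword, fun k => ?_⟩
    have harg : i + ↑u.length + ↑v.length + ↑k = i + ↑(u ++ v).length + ↑k := by
      simp; ring
    rw [harg]; exact htail k
  · rintro ⟨x, hx, i, hword, htail⟩
    refine ⟨x, hx, i, wordAt_append.mpr hword, fun k => ?_⟩
    have harg : i + ↑(u ++ v).length + ↑k = i + ↑u.length + ↑v.length + ↑k := by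
      simp; ring
    rw [harg]; exact htail k

lemma follower_append_subset (u v : List A) : Follower X (u ++ v) ⊆ Follower X v := by
  intro s hs
  obtain ⟨x, hx, i, ⟨h1, h2⟩, htail⟩ := mem_follower_append.mp hs
  exact ⟨x, hx, i + u.length, h2, fun k => by
    have harg : i + ↑u.length + ↑v.length + ↑k = i + ↑u.length + ↑v.length + ↑k := rfl
    exact htail k⟩

lemma inLang_of_follower_nonempty {u : List A} (h : (Follower X u).Nonempty) : InLang X u := by
  obtain ⟨s, x, hx, i, hword, -⟩ := h
  exact ⟨x, hx, i, hword⟩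

lemma follower_nonempty_of_inLang {u : List A} (h : InLang X u) : (Follower X u).Nonempty := by
  obtain ⟨x, hx, i, hword⟩ := h
  exact ⟨fun k => x (i + u.length + k), x, hx, i, hword, fun k => rfl⟩

lemma inLang_prefix_s10 {u v : List A} (h : InLang X (u ++ v)) : InLang X u := by
  obtain ⟨x, hx, i, hword⟩ := h
  exact ⟨x, hx, i, (wordAt_append.mp hword).1⟩

/-- extension of follower set equality by one letter -/
lemma mem_follower_concat {s : ℕ → A} {u : List A} {b : A} :
    s ∈ Follower X (u ++ [b]) ↔
      (fun k => if k = 0 then b else s (k - 1)) ∈ Follower X u := by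
  rw [mem_follower_append]
  unfold Follower WordAt
  constructor
  · rintro ⟨x, hx, i, ⟨h1, h2⟩, htail⟩
    refine ⟨x, hx, i, h1, fun k => ?_⟩
    rcases k with _ | k
    · simpa using h2 0 (by simp)
    · have := htail k
      have harg : i + ↑u.length + ↑([b] : List A).length + ↑k = i + ↑u.length + ↑(k + 1) := by
        push_cast; simp; ring
      rw [harg] at this
      simpa using this
  · rintro ⟨x, hx, i, h1, htail⟩
    refine ⟨x, hx, i, ⟨h1, fun k hk => ?_⟩, fun k => ?_⟩
    · have hk0 : k = 0 := by simpa using hk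
      subst hk0
      simpa using htail 0
    · have := htail (k + 1)
      have harg : i + ↑u.length + ↑(k + 1) = i + ↑u.length + ↑([b] : List A).length + ↑k := by
        push_cast; simp; ring
      rw [← harg]
      simpa using this

lemma follower_concat_congr {u u' : List A} (h : Follower X u = Follower X u') (b : A) :
    Follower X (u ++ [b]) = Follower X (u' ++ [b]) := by
  ext s
  rw [mem_follower_concat, mem_follower_concat, h]

end Aux

section Main
variable {A : Type*} {X : Set (ℤ → A)}

lemma follower_subset_append {w : List A}
    (hF : Follower X w = Follower X ([] : List A)) {u : List A} :
    Follower X u ⊆ Follower X (w ++ u) := by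
  intro s hs
  obtain ⟨x, hx, i, hword, htail⟩ := hs
  have ht : (fun k : ℕ => x (i + k)) ∈ Follower X ([] : List A) := by
    refine ⟨x, hx, i, fun k hk => by simp at hk, fun k => by simp⟩
  rw [← hF] at ht
  obtain ⟨y, hy, j, hwordw, htailw⟩ := ht
  refine mem_follower_append.mpr ⟨y, hy, j, ⟨⟨hwordw, fun k hk => ?_⟩, fun k => ?_⟩⟩
  · rw [htailw k]
    exact hword k hk
  · have := htailw (u.length + k)
    have harg : j + ↑w.length + ↑(u.length + k) = j + ↑w.length + ↑u.length + ↑k := by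
      push_cast; ring
    rw [harg] at this
    rw [this]
    show x (i + ↑(u.length + k)) = s k
    have harg2 : i + (↑(u.length + k) : ℤ) = i + ↑u.length + ↑k := by push_cast; ring
    rw [harg2]
    exact htail k

lemma key_step {w : List A} (hne : w ≠ [])
    (hF : Follower X w = Follower X ([] : List A)) {u : List A} (hu : InLang X u) :
    InLang X ([w.getLast hne] ++ u) ∧ Follower X ([w.getLast hne] ++ u) = Follower X u := by
  set a := w.getLast hne with ha
  have hdecomp : w.dropLast ++ [a] = w := List.dropLast_append_getLast hne
  have h1 : Follower X u ⊆ Follower X (w ++ u) := follower_subset_append hF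
  have h2 : Follower X (w ++ u) ⊆ Follower X ([a] ++ u) := by
    rw [← hdecomp, List.append_assoc]
    exact follower_append_subset _ _
  have h3 : Follower X ([a] ++ u) ⊆ Follower X u := follower_append_subset _ _
  have heq : Follower X ([a] ++ u) = Follower X u := subset_antisymm h3 (h1.trans h2)
  refine ⟨inLang_of_follower_nonempty ?_, heq⟩
  rw [heq]
  exact follower_nonempty_of_inLang hu

theorem sofic_aux {A : Type*} [Fintype A] (X : Set (ℤ → A))
    (hw : ∃ w : List A, w ≠ [] ∧ InLang X w ∧ Follower X w = Follower X ([] : List A))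
    (n : ℕ) (hn : 1 ≤ n)
    (h : ({F | ∃ u : List A, u.length = n ∧ InLang X u ∧ Follower X u = F}).ncard ≤ n) :
    {F | ∃ u : List A, InLang X u ∧ Follower X u = F}.Finite := by
  obtain ⟨w, hne, hwlang, hF⟩ := hw
  set C : ℕ → Set (Set (ℕ → A)) :=
    fun m => {F | ∃ u : List A, u.length = m ∧ InLang X u ∧ Follower X u = F} with hC
  -- finiteness of each level
  have hfin : ∀ m, (C m).Finite := by
    intro m
    apply Set.Finite.subset ((List.finite_length_eq A m).image (Follower X))
    rintro F ⟨u, hlen, -, hFu⟩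
    exact ⟨u, hlen, hFu⟩
  -- monotone
  have hmono : ∀ m, C m ⊆ C (m + 1) := by
    rintro m F ⟨u, hlen, hu, hFu⟩
    obtain ⟨hl, he⟩ := key_step hne hF hu
    exact ⟨[w.getLast hne] ++ u, by simp [hlen], hl, by rw [he, hFu]⟩
  have hchain : ∀ j k, j ≤ k → C j ⊆ C k := by
    intro j k hjk
    induction k, hjk using Nat.le_induction with
    | base => exact subset_rfl
    | succ k hjk ih => exact ih.trans (hmono k)
  -- determinism
  have hdet : ∀ j k, C j ⊆ C k → C (j + 1) ⊆ C (k + 1) := by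
    rintro j k hjk F ⟨v, hlen, hv, hFv⟩
    rcases List.eq_nil_or_concat' v with rfl | ⟨u, b, rfl⟩
    · simp at hlen
    · have hul : u.length = j := by simp at hlen; omega
      have hu : InLang X u := inLang_prefix_s10 hv
      obtain ⟨u', hlen', hu', hFu'⟩ := hjk ⟨u, hul, hu, rfl⟩
      have heq : Follower X (u' ++ [b]) = Follower X (u ++ [b]) :=
        follower_concat_congr hFu' b
      refine ⟨u' ++ [b], by simp [hlen'], inLang_of_follower_nonempty ?_, by rw [heq, hFv]⟩
      rw [heq]
      exact follower_nonempty_of_inLang hv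
  -- X nonempty, C 0 nonempty
  obtain ⟨x0, hx0, -⟩ := hwlang
  have hC0 : (C 0).Nonempty :=
    ⟨Follower X ([] : List A), [], rfl, ⟨x0, hx0, 0, fun k hk => by simp at hk⟩, rfl⟩
  -- pigeonhole: some m < n with C m = C (m+1)
  have hpigeon : ∃ m < n, C m = C (m + 1) := by
    by_contra hcon
    push_neg at hcon
    have hgrow : ∀ m, m ≤ n → m + 1 ≤ (C m).ncard := by
      intro m
      induction m with
      | zero =>
        intro _
        exact (Set.ncard_pos (hfin 0)).mpr hC0
      | succ m ih =>
        intro hm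
        have h1 : m + 1 ≤ (C m).ncard := ih (by omega)
        have hss : C m ⊂ C (m + 1) := (hmono m).ssubset_of_ne (hcon m (by omega))
        have h2 := Set.ncard_lt_ncard hss (hfin (m + 1))
        omega
    have h' : (C n).ncard ≤ n := h
    have := hgrow n le_rfl
    omega
  obtain ⟨m, hmn, hm⟩ := hpigeon
  -- stabilization
  have hstab : ∀ j, C (m + j) = C m := by
    intro j
    induction j with
    | zero => rfl
    | succ j ih =>
      have h1 : C (m + j + 1) ⊆ C (m + 1) := hdet _ _ (le_of_eq ih)
      have h2 : C (m + 1) ⊆ C (m + j + 1) := hdet _ _ (le_of_eq ih.symm)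
      rw [show m + (j+1) = m + j + 1 from rfl, subset_antisymm h1 h2, ← hm]
  -- conclude
  apply Set.Finite.subset (hfin m)
  rintro F ⟨u, hu, hFu⟩
  have : F ∈ C u.length := ⟨u, rfl, hu, hFu⟩
  rcases le_or_gt u.length m with hle | hlt
  · exact hchain _ _ hle this
  · have : F ∈ C (m + (u.length - m)) := by
      rwa [show m + (u.length - m) = u.length by omega]
    rwa [hstab _] at this

end Main

/-- If some non-empty word has the same follower set as the empty word and
`|F_X(n)| ≤ n` for some `n ≥ 1`, then `X` is sofic. -/
theorem sofic_of_emptyWord_follower {A : Type*} [Fintype A] [TopologicalSpace A]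
    [DiscreteTopology A] (X : Set (ℤ → A)) (hX : IsSubshift X)
    (hw : ∃ w : List A, w ≠ [] ∧ InLang X w ∧ Follower X w = Follower X ([] : List A))
    (n : ℕ) (hn : 1 ≤ n) (h : (FollowerSets X n).ncard ≤ n) :
    Sofic X := by
  exact sofic_aux X hw n hn h
end

section
/- Let X be a subshift over a finite alphabet A and suppose there exists a letter a ∈ A with a ∈ L(X) and F_X(a) = F_X(∅). Then for every n ∈ ℕ, n ≥ 1, F_X(n) ⊆ F_X(n+1); that is, every follower set of a word of length n is also the follower set of some word of length n + 1. -/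
lemma follower_cons_eq {A : Type*} (X : Set (ℤ → A)) (a : A) (w : List A)
    (h : Follower X [a] = Follower X ([] : List A)) :
    Follower X (a :: w) = Follower X w := by
  ext s
  constructor
  · rintro ⟨x, hx, i, hword, htail⟩
    refine ⟨x, hx, i + 1, ?_, ?_⟩
    · intro k hk
      have h2 : x (i + (↑(k+1) : ℤ)) = (a :: w).get ⟨k+1, by simpa using Nat.succ_lt_succ hk⟩ :=
        hword (k+1) (by simpa using Nat.succ_lt_succ hk)
      simpa [show i + 1 + (k:ℤ) = i + (↑(k+1):ℤ) by push_cast; ring] using h2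
    · intro k
      have := htail k
      simp only [List.length_cons] at this
      rw [show i + 1 + (w.length : ℤ) + k = i + (↑(w.length + 1) : ℤ) + k by push_cast; ring]
      exact this
  · rintro ⟨x, hx, i, hword, htail⟩
    have ht : (fun k : ℕ => x (i + k)) ∈ Follower X ([] : List A) := by
      refine ⟨x, hx, i, fun k hk => by simp at hk, fun k => by norm_num⟩
    rw [← h] at ht
    obtain ⟨y, hy, j, hja, hjt⟩ := ht
    simp only [List.length_singleton] at hjt
    refine ⟨y, hy, j, ?_, ?_⟩
    · intro k hk
      match k with
      | 0 =>
        have := hja 0 (by simp)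
        simpa using this
      | m + 1 =>
        have hm : m < w.length := by simpa using hk
        have h1 : y (j + 1 + m) = x (i + m) := hjt m
        have h2 : x (i + (m:ℤ)) = w.get ⟨m, hm⟩ := hword m hm
        have : y (j + (↑(m+1):ℤ)) = w.get ⟨m, hm⟩ := by
          rw [show j + (↑(m+1):ℤ) = j + 1 + m by push_cast; ring, h1, h2]
        simpa using this
    · intro k
      have h1 : y (j + 1 + ↑(w.length + k)) = x (i + ↑(w.length + k)) := hjt (w.length + k)
      have h2 := htail k
      rw [show j + ((a :: w).length : ℤ) + k = j + 1 + ↑(w.length + k) by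
        simp; push_cast; ring, h1,
        show i + (↑(w.length + k):ℤ) = i + w.length + k by push_cast; ring]
      exact h2

/-- If some letter `a ∈ L(X)` satisfies `F_X(a) = F_X(∅)`, then for every `n ≥ 1`,
`F_X(n) ⊆ F_X(n+1)`. -/
theorem followerSets_mono_of_letter_eq_empty {A : Type*} [Fintype A] [TopologicalSpace A]
    [DiscreteTopology A] (X : Set (ℤ → A)) (hX : IsSubshift X)
    (ha : ∃ a : A, InLang X [a] ∧ Follower X [a] = Follower X ([] : List A)) :
    ∀ n : ℕ, 1 ≤ n → FollowerSets X n ⊆ FollowerSets X (n + 1) := by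
  obtain ⟨a, haL, hafe⟩ := ha
  intro n hn F hF
  obtain ⟨w, hlen, hwL, hwF⟩ := hF
  have heq := follower_cons_eq X a w hafe
  refine ⟨a :: w, by simp [hlen], ?_, by rw [heq, hwF]⟩
  obtain ⟨x, hx, i, hword⟩ := hwL
  have hs : (fun k : ℕ => x (i + w.length + k)) ∈ Follower X w :=
    ⟨x, hx, i, hword, fun k => rfl⟩
  rw [← heq] at hs
  obtain ⟨y, hy, j, hword', -⟩ := hs
  exact ⟨y, hy, j, hword'⟩
end

section
/- Let X be a subshift over a finite alphabet A. If there exists n ∈ ℕ with n ≥ 2 for which |F_X(n)| ≤ 2, then X is sofic, i.e., the collection {F_X(w) : w ∈ L(X)} of all follower sets of words of X is finite. -/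
namespace SubshiftAux

variable {A : Type*}

/-- prepend a letter to a one-sided sequence -/
def pre (b : A) (s : ℕ → A) : ℕ → A := fun k => match k with
  | 0 => b
  | k + 1 => s k

@[simp] lemma pre_zero (b : A) (s : ℕ → A) : pre b s 0 = b := rfl
@[simp] lemma pre_succ (b : A) (s : ℕ → A) (k : ℕ) : pre b s (k+1) = s k := rfl

/-- derivative of a set of futures by a letter -/
def Der (b : A) (S : Set (ℕ → A)) : Set (ℕ → A) := {s | pre b s ∈ S}

lemma der_union (b : A) (S T : Set (ℕ → A)) : Der b (S ∪ T) = Der b S ∪ Der b T := rfl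

variable {X : Set (ℤ → A)}

lemma mem_follower_concat {g : List A} {b : A} {s : ℕ → A} :
    s ∈ Follower X (g ++ [b]) ↔ pre b s ∈ Follower X g := by
  constructor
  · rintro ⟨x, hx, i, hword, hfut⟩
    refine ⟨x, hx, i, ?_, ?_⟩
    · intro k hk
      have hk' : k < (g ++ [b]).length := by simp; omega
      have := hword k hk'
      simpa [List.get_eq_getElem, List.getElem_append_left hk] using this
    · intro k
      match k with
      | 0 =>
        have hk' : g.length < (g ++ [b]).length := by simp
        have := hword g.length hk'
        simp only [List.get_eq_getElem, List.getElem_concat_length] at this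
        simpa using this
      | k + 1 =>
        have := hfut k
        have harith : i + ↑g.length + ↑(k+1) = i + ↑(g ++ [b]).length + ↑k := by
          simp; push_cast; ring
        rw [harith, this]
        simp
  · rintro ⟨x, hx, i, hword, hfut⟩
    refine ⟨x, hx, i, ?_, ?_⟩
    · intro k hk
      simp only [List.length_append, List.length_singleton, List.length_nil] at hk
      rcases Nat.lt_or_ge k g.length with h | h
      · have := hword k h
        simpa [List.get_eq_getElem, List.getElem_append_left h] using this
      · have hkg : k = g.length := by omega
        subst hkg
        have := hfut 0
        simp only [pre_zero] at this
        simp only [List.get_eq_getElem, List.getElem_concat_length]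
        simpa using this
    · intro k
      have := hfut (k+1)
      have harith : i + ↑(g ++ [b]).length + ↑k = i + ↑g.length + ↑(k+1) := by
        simp; push_cast; ring
      rw [harith, this]
      simp

lemma follower_concat (g : List A) (b : A) :
    Follower X (g ++ [b]) = Der b (Follower X g) := Set.ext fun _ => mem_follower_concat

lemma follower_cons_subset (a : A) (w : List A) :
    Follower X (a :: w) ⊆ Follower X w := by
  rintro s ⟨x, hx, i, hword, hfut⟩
  refine ⟨x, hx, i + 1, ?_, ?_⟩
  · intro k hk
    have hk' : k + 1 < (a :: w).length := by simp; omega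
    have := hword (k+1) hk'
    have harith : i + 1 + (k : ℤ) = i + ((k : ℕ) + 1 : ℕ) := by push_cast; ring
    rw [harith, this]
    simp [List.get_eq_getElem]
  · intro k
    have := hfut k
    have harith : i + 1 + ↑w.length + ↑k = i + ↑(a :: w).length + ↑k := by
      simp; push_cast; ring
    rw [harith, this]

lemma exists_cons_mem {w : List A} {s : ℕ → A} (hs : s ∈ Follower X w) :
    ∃ a : A, s ∈ Follower X (a :: w) := by
  obtain ⟨x, hx, i, hword, hfut⟩ := hs
  refine ⟨x (i - 1), x, hx, i - 1, ?_, ?_⟩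
  · intro k hk
    match k with
    | 0 => simp [List.get_eq_getElem]
    | k + 1 =>
      have hk' : k < w.length := by simpa using hk
      have := hword k hk'
      have harith : i - 1 + ((k : ℕ) + 1 : ℕ) = i + (k : ℕ) := by push_cast; ring
      rw [harith, this]
      simp [List.get_eq_getElem]
  · intro k
    have := hfut k
    have harith : i - 1 + ↑(w.length + 1) + ↑k = i + ↑w.length + ↑k := by push_cast; ring
    simpa [harith] using this

lemma follower_append_subset (l r : List A) :
    Follower X (l ++ r) ⊆ Follower X r := by
  induction l with
  | nil => simp
  | cons a l ih => exact (follower_cons_subset a (l ++ r)).trans ih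

lemma inLang_iff_nonempty {w : List A} : InLang X w ↔ (Follower X w).Nonempty := by
  constructor
  · rintro ⟨x, hx, i, hword⟩
    exact ⟨fun k => x (i + w.length + k), x, hx, i, hword, fun k => rfl⟩
  · rintro ⟨s, x, hx, i, hword, _⟩
    exact ⟨x, hx, i, hword⟩

lemma nonempty_of_concat {g : List A} {b : A} (h : (Follower X (g ++ [b])).Nonempty) :
    (Follower X g).Nonempty := by
  obtain ⟨s, hs⟩ := h
  exact ⟨pre b s, mem_follower_concat.mp hs⟩


variable {A : Type*} {X : Set (ℤ → A)} {n : ℕ}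

/-- The core lemma: under the two-follower-set hypothesis at level `n ≥ 2`, every word of
length `n+1` in the language has the same follower set as some word of length `n`. -/
lemma core (hn : 2 ≤ n)
    (hpair : ∀ r₁ r₂ r₃ : List A, r₁.length = n → r₂.length = n → r₃.length = n →
      (Follower X r₁).Nonempty → (Follower X r₂).Nonempty → (Follower X r₃).Nonempty →
      Follower X r₁ = Follower X r₂ ∨ Follower X r₁ = Follower X r₃ ∨
        Follower X r₂ = Follower X r₃)
    (w : List A) (b : A) (hw : w.length = n) (hv : (Follower X (w ++ [b])).Nonempty) :
    ∃ r : List A, r.length = n ∧ (Follower X r).Nonempty ∧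
      Follower X (w ++ [b]) = Follower X r := by
  classical
  -- decompose w = a :: t
  obtain ⟨a, t, rfl⟩ : ∃ a t, w = a :: t := by
    cases w with
    | nil => simp at hw; omega
    | cons a t => exact ⟨a, t, rfl⟩
  have ht : t.length + 1 = n := by simpa using hw
  -- q = t ++ [b] : the length-n suffix of w ++ [b]
  set q : List A := t ++ [b] with hq_def
  have hq_len : q.length = n := by simp [hq_def, ht]
  have hsub_vq : Follower X ((a :: t) ++ [b]) ⊆ Follower X q := by
    have : (a :: t) ++ [b] = a :: q := by simp [hq_def]
    rw [this]; exact follower_cons_subset a q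
  have hq_ne : (Follower X q).Nonempty := hv.mono hsub_vq
  have hv_eq : Follower X ((a :: t) ++ [b]) = Der b (Follower X (a :: t)) :=
    follower_concat _ _
  by_cases hB : ∃ ρ : List A, ρ.length + 1 = n ∧ (Follower X (ρ ++ [b])).Nonempty ∧
      Follower X (ρ ++ [b]) ≠ Follower X q
  · -- CASE B : two distinct follower sets among b-ending words of length n
    obtain ⟨ρ₂, hρ₂len, hρ₂ne, hρ₂neq⟩ := hB
    set K₁ := Follower X q with hK₁
    set K₂ := Follower X (ρ₂ ++ [b]) with hK₂
    have hK12 : K₁ ≠ K₂ := fun h => hρ₂neq h.symm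
    have hρ₂len' : (ρ₂ ++ [b]).length = n := by simp [hρ₂len]
    have cls : ∀ r : List A, r.length = n → (Follower X r).Nonempty →
        Follower X r = K₁ ∨ Follower X r = K₂ := by
      intro r hr hne
      rcases hpair r q (ρ₂ ++ [b]) hr hq_len hρ₂len' hne hq_ne hρ₂ne with h | h | h
      · exact Or.inl h
      · exact Or.inr h
      · exact absurd h hK12
    -- decomposition lemma
    have dec : ∀ ρ : List A, ρ.length + 1 = n → (Follower X (ρ ++ [b])).Nonempty →
        Follower X (ρ ++ [b]) = Der b K₁ ∨ Follower X (ρ ++ [b]) = Der b K₂ ∨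
        Follower X (ρ ++ [b]) = Der b K₁ ∪ Der b K₂ := by
      intro ρ hρ hne
      set K := Follower X (ρ ++ [b]) with hK
      have step : ∀ s ∈ K, (s ∈ Der b K₁ ∧ ∃ z, Follower X (z :: ρ) = K₁ ∧
            (Follower X ((z :: ρ) ++ [b])).Nonempty) ∨
          (s ∈ Der b K₂ ∧ ∃ z, Follower X (z :: ρ) = K₂ ∧
            (Follower X ((z :: ρ) ++ [b])).Nonempty) := by
        intro s hs
        obtain ⟨z, hz⟩ := exists_cons_mem hs
        have hz' : s ∈ Follower X ((z :: ρ) ++ [b]) := by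
          simpa using hz
        have hmem : pre b s ∈ Follower X (z :: ρ) := mem_follower_concat.mp hz'
        have hlen : (z :: ρ).length = n := by simp [hρ]
        rcases cls (z :: ρ) hlen ⟨pre b s, hmem⟩ with h | h
        · exact Or.inl ⟨by rw [← h]; exact hmem, z, h, ⟨s, hz'⟩⟩
        · exact Or.inr ⟨by rw [← h]; exact hmem, z, h, ⟨s, hz'⟩⟩
      have piece : ∀ z : A, (Follower X ((z :: ρ) ++ [b])).Nonempty →
          Follower X ((z :: ρ) ++ [b]) ⊆ K := by
        intro z _
        have : (z :: ρ) ++ [b] = z :: (ρ ++ [b]) := by simp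
        rw [this]
        exact follower_cons_subset _ _
      by_cases hE₁ : ∃ z, Follower X (z :: ρ) = K₁ ∧ (Follower X ((z :: ρ) ++ [b])).Nonempty
      · by_cases hE₂ : ∃ z, Follower X (z :: ρ) = K₂ ∧
            (Follower X ((z :: ρ) ++ [b])).Nonempty
        · right; right
          apply Set.Subset.antisymm
          · intro s hs
            rcases step s hs with ⟨h, _⟩ | ⟨h, _⟩
            · exact Or.inl h
            · exact Or.inr h
          · obtain ⟨z₁, hz₁, hz₁ne⟩ := hE₁
            obtain ⟨z₂, hz₂, hz₂ne⟩ := hE₂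
            have p₁ : Der b K₁ ⊆ K := by
              have : Follower X ((z₁ :: ρ) ++ [b]) = Der b K₁ := by
                rw [follower_concat, hz₁]
              rw [← this]; exact piece z₁ hz₁ne
            have p₂ : Der b K₂ ⊆ K := by
              have : Follower X ((z₂ :: ρ) ++ [b]) = Der b K₂ := by
                rw [follower_concat, hz₂]
              rw [← this]; exact piece z₂ hz₂ne
            exact Set.union_subset p₁ p₂
        · left
          apply Set.Subset.antisymm
          · intro s hs
            rcases step s hs with ⟨h, _⟩ | ⟨_, hw₂⟩
            · exact h
            · exact absurd hw₂ hE₂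
          · obtain ⟨z₁, hz₁, hz₁ne⟩ := hE₁
            have : Follower X ((z₁ :: ρ) ++ [b]) = Der b K₁ := by
              rw [follower_concat, hz₁]
            rw [← this]; exact piece z₁ hz₁ne
      · right; left
        apply Set.Subset.antisymm
        · intro s hs
          rcases step s hs with ⟨_, hw₁⟩ | ⟨h, _⟩
          · exact absurd hw₁ hE₁
          · exact h
        · obtain ⟨s, hs⟩ := hne
          rcases step s hs with ⟨_, hw₁⟩ | ⟨_, z₂, hz₂, hz₂ne⟩
          · exact absurd hw₁ hE₁
          · have : Follower X ((z₂ :: ρ) ++ [b]) = Der b K₂ := by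
              rw [follower_concat, hz₂]
            rw [← this]; exact piece z₂ hz₂ne
    -- apply dec to both realizers
    have hq_split : q = t ++ [b] := hq_def
    have d₁ : K₁ = Der b K₁ ∨ K₁ = Der b K₂ ∨ K₁ = Der b K₁ ∪ Der b K₂ := by
      have := dec t ht hq_ne
      rwa [← hq_def, ← hK₁] at this
    have d₂ : K₂ = Der b K₁ ∨ K₂ = Der b K₂ ∨ K₂ = Der b K₁ ∪ Der b K₂ := by
      have := dec ρ₂ hρ₂len hρ₂ne
      rwa [← hK₂] at this
    set P := Der b K₁ with hP
    set Q := Der b K₂ with hQ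
    -- FK case analysis : conclude P ∈ {K₁, K₂} and Q ∈ {K₁, K₂}
    have FK : (P = K₁ ∨ P = K₂) ∧ (Q = K₁ ∨ Q = K₂) := by
      rcases d₁ with h1 | h1 | h1 <;> rcases d₂ with h2 | h2 | h2
      · exact absurd (h1.trans h2.symm) hK12
      · exact ⟨Or.inl h1.symm, Or.inr h2.symm⟩
      · -- K₁ = P, K₂ = P ∪ Q
        have hDP : Der b P = P := by rw [← h1, ← hP]; exact h1.symm
        have hQeq : Q = P ∪ Der b Q := by
          conv_lhs => rw [hQ, h2, der_union, hDP]
        have hPQ : P ⊆ Q := hQeq ▸ Set.subset_union_left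
        have : K₂ = Q := by rw [h2, Set.union_eq_self_of_subset_left hPQ]
        exact ⟨Or.inl h1.symm, Or.inr this.symm⟩
      · exact ⟨Or.inr h2.symm, Or.inl h1.symm⟩
      · exact absurd (h1.trans h2.symm) hK12
      · -- K₁ = Q, K₂ = P ∪ Q : impossible
        exfalso
        have hDQ : Der b Q = P := by rw [← h1, ← hP]
        have hQeq : Q = Der b P ∪ P := by
          conv_lhs => rw [hQ, h2, der_union, hDQ]
        have hPQ : P ⊆ Q := hQeq ▸ Set.subset_union_right
        have : K₂ = Q := by rw [h2, Set.union_eq_self_of_subset_left hPQ]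
        exact hK12 (h1.trans this.symm)
      · -- K₁ = P ∪ Q, K₂ = P : impossible
        exfalso
        have hDP : Der b P = Q := by rw [← h2, ← hQ]
        have hPeq : P = Q ∪ Der b Q := by
          conv_lhs => rw [hP, h1, der_union, hDP]
        have hQP : Q ⊆ P := hPeq ▸ Set.subset_union_left
        have : K₁ = P := by rw [h1, Set.union_eq_self_of_subset_right hQP]
        exact hK12 (this.trans h2.symm)
      · -- K₁ = P ∪ Q, K₂ = Q
        have hDQ : Der b Q = Q := by rw [← h2, ← hQ]; exact h2.symm
        have hPeq : P = Der b P ∪ Q := by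
          conv_lhs => rw [hP, h1, der_union, hDQ]
        have hQP : Q ⊆ P := hPeq ▸ Set.subset_union_right
        have : K₁ = P := by rw [h1, Set.union_eq_self_of_subset_right hQP]
        exact ⟨Or.inl this.symm, Or.inr h2.symm⟩
      · exact absurd (h1.trans h2.symm) hK12
    -- conclude
    have hw_ne : (Follower X (a :: t)).Nonempty := by
      obtain ⟨s, hs⟩ := hv
      have : (a :: t) ++ [b] = a :: q := by simp [hq_def]
      exact ⟨pre b s, mem_follower_concat.mp hs⟩
    rcases cls (a :: t) hw hw_ne with hcw | hcw
    · have : Follower X ((a :: t) ++ [b]) = P := by rw [hv_eq, hcw]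
      rcases FK.1 with h | h
      · exact ⟨q, hq_len, hq_ne, by rw [this, h]⟩
      · exact ⟨ρ₂ ++ [b], hρ₂len', hρ₂ne, by rw [this, h]⟩
    · have : Follower X ((a :: t) ++ [b]) = Q := by rw [hv_eq, hcw]
      rcases FK.2 with h | h
      · exact ⟨q, hq_len, hq_ne, by rw [this, h]⟩
      · exact ⟨ρ₂ ++ [b], hρ₂len', hρ₂ne, by rw [this, h]⟩
  · -- CASE A : all b-ending words of length n have follower set K = Follower X q
    push_neg at hB
    set K := Follower X q with hK
    have hA : ∀ ρ : List A, ρ.length + 1 = n → (Follower X (ρ ++ [b])).Nonempty →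
        Follower X (ρ ++ [b]) = K := fun ρ h1 h2 => hB ρ h1 h2
    -- (a)-fact: every b-ending word of length n-1 has follower K
    have factA : ∀ g : List A, g.length + 2 = n → (Follower X (g ++ [b])).Nonempty →
        Follower X (g ++ [b]) = K := by
      intro g hg hne
      apply Set.Subset.antisymm
      · intro s hs
        obtain ⟨z, hz⟩ := exists_cons_mem hs
        have hz' : s ∈ Follower X ((z :: g) ++ [b]) := by simpa using hz
        have hlen : (z :: g).length + 1 = n := by simp; omega
        rw [hA (z :: g) hlen ⟨s, hz'⟩] at hz'
        exact hz'
      · obtain ⟨s, hs⟩ := hne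
        obtain ⟨z, hz⟩ := exists_cons_mem hs
        have hz' : s ∈ Follower X ((z :: g) ++ [b]) := by simpa using hz
        have hlen : (z :: g).length + 1 = n := by simp; omega
        rw [← hA (z :: g) hlen ⟨s, hz'⟩]
        have hrw : (z :: g) ++ [b] = z :: (g ++ [b]) := by simp
        rw [hrw]
        exact follower_cons_subset _ _
    set H := Follower X (a :: t) with hH
    have hw_ne : (Follower X (a :: t)).Nonempty := by
      obtain ⟨s, hs⟩ := hv
      exact ⟨pre b s, mem_follower_concat.mp hs⟩
    -- head decomposition of t
    obtain ⟨c, t₂, rfl⟩ : ∃ c t₂, t = c :: t₂ := by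
      cases t with
      | nil => simp at ht; omega
      | cons c t₂ => exact ⟨c, t₂, rfl⟩
    by_cases hHK : H = K
    · -- (c) : [w] = K ; realizer (t₂ ++ [b]) ++ [b]
      have hm_ne : (Follower X (t₂ ++ [b])).Nonempty := by
        obtain ⟨s, hs⟩ := hq_ne
        have hs' : s ∈ Follower X (c :: (t₂ ++ [b])) := hs
        exact ⟨s, follower_cons_subset _ _ hs'⟩
      have hm_len : t₂.length + 2 = n := by
        have h2 : t₂.length + 1 + 1 = n := by simpa using ht
        omega
      have hmK : Follower X (t₂ ++ [b]) = K := factA t₂ hm_len hm_ne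
      have hvK : Follower X ((a :: c :: t₂) ++ [b]) = Der b K := by
        rw [hv_eq, hHK]
      refine ⟨(t₂ ++ [b]) ++ [b], by simp; omega, ?_, ?_⟩
      · rw [follower_concat (t₂ ++ [b]) b, hmK, ← hvK]; exact hv
      · rw [follower_concat (t₂ ++ [b]) b, hmK, hvK]
    · -- H ≠ K
      by_cases hU' : ∃ u : List A, u.length + 1 = n ∧ (Follower X u).Nonempty ∧
          Follower X u = H
      · -- (d)
        obtain ⟨u, hu_len, hu_ne, hu_eq⟩ := hU'
        have h1 : Follower X (u ++ [b]) = Der b H := by rw [follower_concat, hu_eq]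
        have hne' : (Follower X (u ++ [b])).Nonempty := by
          rw [h1]
          obtain ⟨s, hs⟩ := hv
          rw [hv_eq] at hs
          exact ⟨s, hs⟩
        have h2 : Follower X (u ++ [b]) = K := hA u hu_len hne'
        refine ⟨q, hq_len, hq_ne, ?_⟩
        rw [hv_eq, ← h1, h2, hK]
      · -- ♦ : no word of length n-1 has follower H
        have hU : ∀ u : List A, u.length + 1 = n → (Follower X u).Nonempty →
            Follower X u ≠ H := by
          push_neg at hU'
          exact hU'
        have cls : ∀ r : List A, r.length = n → (Follower X r).Nonempty →
            Follower X r = H ∨ Follower X r = K := by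
          intro r hr hne
          rcases hpair r (a :: c :: t₂) q hr hw hq_len hne hw_ne hq_ne with h | h | h
          · exact Or.inl (by rw [h, hH])
          · exact Or.inr h
          · exfalso; apply hHK; rw [hH]; exact h
        have clsm : ∀ u : List A, u.length + 1 = n → (Follower X u).Nonempty →
            Follower X u = K ∨ Follower X u = H ∪ K := by
          intro u hu hne
          have step : ∀ s ∈ Follower X u, (s ∈ H ∧ ∃ z, Follower X (z :: u) = H) ∨
              (s ∈ K ∧ ∃ z, Follower X (z :: u) = K) := by
            intro s hs
            obtain ⟨z, hz⟩ := exists_cons_mem hs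
            have hlen : (z :: u).length = n := by simp [hu]
            rcases cls (z :: u) hlen ⟨s, hz⟩ with h | h
            · exact Or.inl ⟨by rw [← h]; exact hz, z, h⟩
            · exact Or.inr ⟨by rw [← h]; exact hz, z, h⟩
          by_cases hEH : ∃ z, Follower X (z :: u) = H
          · by_cases hEK : ∃ z, Follower X (z :: u) = K
            · right
              apply Set.Subset.antisymm
              · intro s hs
                rcases step s hs with ⟨h, _⟩ | ⟨h, _⟩
                · exact Or.inl h
                · exact Or.inr h
              · obtain ⟨z₁, hz₁⟩ := hEH
                obtain ⟨z₂, hz₂⟩ := hEK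
                refine Set.union_subset ?_ ?_
                · rw [← hz₁]; exact follower_cons_subset _ _
                · rw [← hz₂]; exact follower_cons_subset _ _
            · exfalso
              have huH : Follower X u = H := by
                apply Set.Subset.antisymm
                · intro s hs
                  rcases step s hs with ⟨h, _⟩ | ⟨_, hw₂⟩
                  · exact h
                  · exact absurd hw₂ hEK
                · obtain ⟨z₁, hz₁⟩ := hEH
                  rw [← hz₁]; exact follower_cons_subset _ _
              exact hU u hu hne huH
          · left
            apply Set.Subset.antisymm
            · intro s hs
              rcases step s hs with ⟨_, hw₁⟩ | ⟨h, _⟩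
              · exact absurd hw₁ hEH
              · exact h
            · obtain ⟨s, hs⟩ := hne
              rcases step s hs with ⟨_, hw₁⟩ | ⟨_, z₂, hz₂⟩
              · exact absurd hw₁ hEH
              · rw [← hz₂]; exact follower_cons_subset _ _
        have ht_ne : (Follower X (c :: t₂)).Nonempty := by
          obtain ⟨s, hs⟩ := hq_ne
          have hs' : s ∈ Follower X ((c :: t₂) ++ [b]) := hs
          exact ⟨pre b s, mem_follower_concat.mp hs'⟩
        have ht_len : (c :: t₂).length + 1 = n := by simpa using ht
        have hKnotH : ¬ K ⊆ H := by
          intro hKH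
          have hHuK : H ∪ K = H := Set.union_eq_self_of_subset_right hKH
          have htK : Follower X (c :: t₂) = K := by
            rcases clsm (c :: t₂) ht_len ht_ne with h | h
            · exact h
            · exact absurd (h.trans hHuK) (hU (c :: t₂) ht_len ht_ne)
          have hHsub : H ⊆ K := by
            rw [hH, ← htK]
            exact follower_cons_subset _ _
          exact hHK (Set.Subset.antisymm hHsub hKH)
        -- last-letter decomposition of t = c :: t₂
        obtain ⟨t', β, heq⟩ : ∃ t' β, c :: t₂ = t' ++ [β] := by
          rcases List.eq_nil_or_concat (c :: t₂) with h | ⟨t', β, h⟩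
          · simp at h
          · exact ⟨t', β, by simpa using h⟩
        have ht'_len : t'.length + 2 = n := by
          have h1 := congrArg List.length heq
          simp only [List.length_cons, List.length_append, List.length_singleton, List.length_nil] at h1
          have h2 : t₂.length + 1 + 1 = n := by simpa using ht
          omega
        have hwsplit : a :: c :: t₂ = (a :: t') ++ [β] := by rw [heq]; rfl
        have hp_ne : (Follower X (a :: t')).Nonempty := by
          obtain ⟨s, hs⟩ := hw_ne
          rw [hwsplit] at hs
          exact ⟨pre β s, mem_follower_concat.mp hs⟩
        have hp_len : (a :: t').length + 1 = n := by
          simp only [List.length_cons]; omega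
        have hH_der : H = Der β (Follower X (a :: t')) := by
          rw [hH, hwsplit, follower_concat]
        by_cases hHsubK : H ⊆ K
        · -- A1
          have hallK : ∀ u : List A, u.length + 1 = n → (Follower X u).Nonempty →
              Follower X u = K := by
            intro u hu hne
            rcases clsm u hu hne with h | h
            · exact h
            · rwa [Set.union_eq_self_of_subset_left hHsubK] at h
          refine ⟨q, hq_len, hq_ne, Set.Subset.antisymm hsub_vq ?_⟩
          intro s hs
          have hs' : s ∈ Follower X ((c :: t₂) ++ [b]) := hs
          obtain ⟨z, hz⟩ := exists_cons_mem hs'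
          have hlist : z :: ((c :: t₂) ++ [b]) = ((z :: t') ++ [β]) ++ [b] := by
            rw [heq]; rfl
          rw [hlist] at hz
          have h1 : pre b s ∈ Follower X ((z :: t') ++ [β]) := mem_follower_concat.mp hz
          have h2 : pre β (pre b s) ∈ Follower X (z :: t') := mem_follower_concat.mp h1
          have hzt'K : Follower X (z :: t') = K :=
            hallK (z :: t') (by simp only [List.length_cons]; omega) ⟨_, h2⟩
          have hat'K : Follower X (a :: t') = K := hallK (a :: t') hp_len hp_ne
          rw [hzt'K, ← hat'K] at h2
          have h3 : pre b s ∈ Follower X ((a :: t') ++ [β]) := mem_follower_concat.mpr h2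
          rw [← hwsplit] at h3
          exact mem_follower_concat.mpr h3
        · -- A2 : H, K incomparable
          have hm_ne : (Follower X (t₂ ++ [b])).Nonempty := by
            obtain ⟨s, hs⟩ := hq_ne
            have hs' : s ∈ Follower X (c :: (t₂ ++ [b])) := hs
            exact ⟨s, follower_cons_subset _ _ hs'⟩
          have hm_len : t₂.length + 2 = n := by
            have h2 : t₂.length + 1 + 1 = n := by simpa using ht
            omega
          have hmK : Follower X (t₂ ++ [b]) = K := factA t₂ hm_len hm_ne
          -- Step β1 : Der β K = ∅
          have hDerβK : Der β K = (∅ : Set (ℕ → A)) := by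
            by_contra hnemp
            have hne' : (Der β K).Nonempty := Set.nonempty_iff_ne_empty.mpr hnemp
            have hmβ : Follower X ((t₂ ++ [b]) ++ [β]) = Der β K := by
              rw [follower_concat (t₂ ++ [b]) β, hmK]
            have hmβ_ne : (Follower X ((t₂ ++ [b]) ++ [β])).Nonempty := by
              rw [hmβ]; exact hne'
            have hmβ_len : ((t₂ ++ [b]) ++ [β]).length = n := by
              simp only [List.length_append, List.length_singleton, List.length_nil]; omega
            rcases cls _ hmβ_len hmβ_ne with hcase | hcase
            · -- Der β K = H : contradiction via ♦
              have hDβK_H : Der β K = H := by rw [← hmβ, hcase]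
              obtain ⟨d, m₂, hm_eq⟩ : ∃ d m₂, t₂ ++ [b] = d :: m₂ := by
                cases t₂ with
                | nil => exact ⟨b, [], rfl⟩
                | cons d t₃ => exact ⟨d, t₃ ++ [b], rfl⟩
              have hm₂_len : m₂.length + 1 + 1 = n := by
                have h3 := congrArg List.length hm_eq
                simp only [List.length_append, List.length_singleton, List.length_nil,
                  List.length_cons] at h3
                omega
              have hu₀_ne : (Follower X (m₂ ++ [β])).Nonempty := by
                obtain ⟨s, hs⟩ := hmβ_ne
                have hlist2 : (t₂ ++ [b]) ++ [β] = d :: (m₂ ++ [β]) := by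
                  rw [hm_eq]; rfl
                rw [hlist2] at hs
                exact ⟨s, follower_cons_subset _ _ hs⟩
              have hu₀_len : (m₂ ++ [β]).length + 1 = n := by
                simp only [List.length_append, List.length_singleton, List.length_nil]; omega
              have hall : ∀ z : A, (Follower X (z :: (m₂ ++ [β]))).Nonempty →
                  Follower X (z :: (m₂ ++ [β])) = H := by
                intro z hzne
                have hzder : Follower X (z :: (m₂ ++ [β])) =
                    Der β (Follower X (z :: m₂)) := by
                  rw [show z :: (m₂ ++ [β]) = (z :: m₂) ++ [β] from rfl,
                    follower_concat (z :: m₂) β]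
                have hzm₂_ne : (Follower X (z :: m₂)).Nonempty := by
                  obtain ⟨s, hs⟩ := hzne
                  rw [hzder] at hs
                  exact ⟨pre β s, hs⟩
                have hzm₂_len : (z :: m₂).length + 1 = n := by
                  simp only [List.length_cons]; omega
                have hzlen2 : (z :: (m₂ ++ [β])).length = n := by
                  simp only [List.length_cons, List.length_append,
                    List.length_singleton, List.length_nil]; omega
                rcases clsm (z :: m₂) hzm₂_len hzm₂_ne with h | h
                · rw [hzder, h]; exact hDβK_H
                · have hval : Follower X (z :: (m₂ ++ [β])) = Der β H ∪ H := by
                    rw [hzder, h, der_union, hDβK_H]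
                  rcases cls (z :: (m₂ ++ [β])) hzlen2 hzne with h2 | h2
                  · exact h2
                  · exfalso
                    apply hHsubK
                    rw [← h2, hval]
                    exact Set.subset_union_right
              have hu₀H : Follower X (m₂ ++ [β]) = H := by
                apply Set.Subset.antisymm
                · intro s hs
                  obtain ⟨z, hz⟩ := exists_cons_mem hs
                  rw [hall z ⟨s, hz⟩] at hz
                  exact hz
                · obtain ⟨s, hs⟩ := hu₀_ne
                  obtain ⟨z, hz⟩ := exists_cons_mem hs
                  rw [← hall z ⟨s, hz⟩]
                  exact follower_cons_subset _ _
              exact hU (m₂ ++ [β]) hu₀_len hu₀_ne hu₀H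
            · -- Der β K = K : contradiction
              have hDβK_K : Der β K = K := by rw [← hmβ, hcase]
              rcases clsm (a :: t') hp_len hp_ne with h | h
              · apply hHK
                rw [hH_der, h, hDβK_K]
              · apply hKnotH
                have hHeq : H = Der β H ∪ K := by
                  conv_lhs => rw [hH_der, h, der_union, hDβK_K]
                intro x hx
                rw [hHeq]
                exact Set.mem_union_right _ hx
          -- Step β2 : [p] = H ∪ K and H = Der β H
          have hpHK : Follower X (a :: t') = H ∪ K := by
            rcases clsm (a :: t') hp_len hp_ne with h | h
            · exfalso
              have hHe : H = Der β K := by rw [hH_der, h]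
              rw [hDerβK] at hHe
              obtain ⟨s, hs⟩ := hw_ne
              rw [← hH] at hs
              rw [hHe] at hs
              exact hs
            · exact h
          have hHDβH : H = Der β H := by
            conv_lhs => rw [hH_der, hpHK, der_union, hDerβK]
            rw [Set.union_empty]
          -- Step rep : [w ++ replicate j β] = H
          have hrep : ∀ j : ℕ, Follower X ((a :: c :: t₂) ++ List.replicate j β) = H := by
            intro j
            induction j with
            | zero => simp [hH]
            | succ j ih =>
              have hlist : (a :: c :: t₂) ++ List.replicate (j+1) β =
                  ((a :: c :: t₂) ++ List.replicate j β) ++ [β] := by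
                rw [List.replicate_succ', ← List.append_assoc]
              rw [hlist, follower_concat ((a :: c :: t₂) ++ List.replicate j β) β, ih,
                ← hHDβH]
          have hrepn_sub : Follower X ((a :: c :: t₂) ++ List.replicate n β) ⊆
              Follower X (List.replicate n β) := follower_append_subset _ _
          have hrepn_ne : (Follower X (List.replicate n β)).Nonempty := by
            obtain ⟨s, hs⟩ := hw_ne
            rw [← hH] at hs
            rw [← hrep n] at hs
            exact ⟨s, hrepn_sub hs⟩
          have hrepnH : Follower X (List.replicate n β) = H := by
            rcases cls (List.replicate n β) (by simp) hrepn_ne with h | h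
            · exact h
            · exfalso
              apply hHsubK
              rw [← h, ← hrep n]
              exact hrepn_sub
          obtain ⟨nn, hnn⟩ : ∃ nn, n = nn + 1 := ⟨n - 1, by omega⟩
          have hrepb : Follower X (List.replicate n β ++ [b]) = Der b H := by
            rw [follower_concat (List.replicate n β) b, hrepnH]
          have hrepb_ne : (Follower X (List.replicate n β ++ [b])).Nonempty := by
            rw [hrepb]
            obtain ⟨s, hs⟩ := hv
            rw [hv_eq] at hs
            exact ⟨s, hs⟩
          have hr₅_ne : (Follower X (List.replicate nn β ++ [b])).Nonempty := by
            obtain ⟨s, hs⟩ := hrepb_ne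
            have hlist : List.replicate n β ++ [b] = β :: (List.replicate nn β ++ [b]) := by
              rw [hnn, List.replicate_succ]; rfl
            rw [hlist] at hs
            exact ⟨s, follower_cons_subset _ _ hs⟩
          have hr₅K : Follower X (List.replicate nn β ++ [b]) = K :=
            hA _ (by simp only [List.length_append, List.length_replicate,
              List.length_singleton, List.length_nil]; omega) hr₅_ne
          refine ⟨q, hq_len, hq_ne, Set.Subset.antisymm hsub_vq ?_⟩
          intro s hs
          have hs' : s ∈ Follower X (List.replicate nn β ++ [b]) := by
            rw [hr₅K]; exact hs
          obtain ⟨z, hz⟩ := exists_cons_mem hs'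
          obtain ⟨nn', hnn'⟩ : ∃ nn', nn = nn' + 1 := ⟨nn - 1, by omega⟩
          have hlist : z :: (List.replicate nn β ++ [b]) =
              ((z :: List.replicate nn' β) ++ [β]) ++ [b] := by
            rw [hnn', List.replicate_succ']
            simp
          rw [hlist] at hz
          have h1 : pre b s ∈ Follower X ((z :: List.replicate nn' β) ++ [β]) :=
            mem_follower_concat.mp hz
          have h2 : pre β (pre b s) ∈ Follower X (z :: List.replicate nn' β) :=
            mem_follower_concat.mp h1
          have hzlen : (z :: List.replicate nn' β).length + 1 = n := by
            simp only [List.length_cons, List.length_replicate]; omega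
          have hz_ne : (Follower X (z :: List.replicate nn' β)).Nonempty :=
            ⟨pre β (pre b s), h2⟩
          have h1' : pre b s ∈ Der β (Follower X (z :: List.replicate nn' β)) := h2
          rcases clsm _ hzlen hz_ne with h | h
          · exfalso
            rw [h] at h1'
            rw [hDerβK] at h1'
            exact h1'
          · rw [h, der_union, hDerβK, Set.union_empty, ← hHDβH, hH] at h1'
            exact mem_follower_concat.mpr h1'

lemma finite_words_length_le (A : Type*) [Fintype A] (n : ℕ) :
    {l : List A | l.length ≤ n}.Finite := by
  induction n with
  | zero =>
    have : {l : List A | l.length ≤ 0} ⊆ {[]} := by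
      intro l hl
      simp at hl ⊢
      exact hl
    exact (Set.finite_singleton _).subset this
  | succ n ih =>
    have hsub : {l : List A | l.length ≤ n + 1} ⊆
        insert [] (⋃ a : A, (fun l => a :: l) '' {l : List A | l.length ≤ n}) := by
      intro l hl
      cases l with
      | nil => exact Set.mem_insert _ _
      | cons a l =>
        apply Set.mem_insert_of_mem
        apply Set.mem_iUnion.mpr
        exact ⟨a, l, by simpa using hl, rfl⟩
    exact ((Set.finite_iUnion (fun a => ih.image _)).insert _).subset hsub

theorem sofic_of_pair {A : Type*} [Fintype A] (X : Set (ℤ → A)) (n : ℕ) (hn : 2 ≤ n)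
    (hpair : ∀ r₁ r₂ r₃ : List A, r₁.length = n → r₂.length = n → r₃.length = n →
      (Follower X r₁).Nonempty → (Follower X r₂).Nonempty → (Follower X r₃).Nonempty →
      Follower X r₁ = Follower X r₂ ∨ Follower X r₁ = Follower X r₃ ∨
        Follower X r₂ = Follower X r₃) :
    Sofic X := by
  classical
  have claim : ∀ w : List A, (Follower X w).Nonempty →
      ∃ r : List A, r.length ≤ n ∧ Follower X r = Follower X w := by
    intro w
    induction w using List.reverseRecOn with
    | nil => exact fun _ => ⟨[], by simp, rfl⟩
    | append_singleton g e ih =>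
      intro hne
      have hg_ne : (Follower X g).Nonempty := nonempty_of_concat hne
      obtain ⟨r, hr_len, hr_eq⟩ := ih hg_ne
      have hre : Follower X (r ++ [e]) = Follower X (g ++ [e]) := by
        rw [follower_concat r e, follower_concat g e, hr_eq]
      rcases Nat.lt_or_ge r.length n with h | h
      · exact ⟨r ++ [e], by simp; omega, hre⟩
      · have hrn : r.length = n := le_antisymm hr_len h
        have hre_ne : (Follower X (r ++ [e])).Nonempty := by rw [hre]; exact hne
        obtain ⟨r', hr'_len, _, hr'_eq⟩ := core hn hpair r e hrn hre_ne
        exact ⟨r', le_of_eq hr'_len, by rw [← hr'_eq, hre]⟩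
  have hsub : {F | ∃ w : List A, InLang X w ∧ Follower X w = F} ⊆
      (Follower X) '' {l : List A | l.length ≤ n} := by
    rintro F ⟨w, hw, rfl⟩
    obtain ⟨r, hr_len, hr_eq⟩ := claim w (inLang_iff_nonempty.mp hw)
    exact ⟨r, hr_len, hr_eq⟩
  exact ((finite_words_length_le A n).image _).subset hsub

end SubshiftAux

/-- If `|F_X(n)| ≤ 2` for some `n ≥ 2`, then `X` is sofic. -/
theorem sofic_of_followerSets_card_le_two {A : Type*} [Fintype A] [TopologicalSpace A]
    [DiscreteTopology A] (X : Set (ℤ → A)) (hX : IsSubshift X) (n : ℕ) (hn : 2 ≤ n)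
    (h : (FollowerSets X n).ncard ≤ 2) :
    Sofic X := by
  classical
  apply SubshiftAux.sofic_of_pair X n hn
  intro r₁ r₂ r₃ h₁ h₂ h₃ hn₁ hn₂ hn₃
  by_contra hcon
  push_neg at hcon
  obtain ⟨h12, h13, h23⟩ := hcon
  have hfin : (FollowerSets X n).Finite := by
    have : FollowerSets X n ⊆ (Follower X) '' {l : List A | l.length ≤ n} := by
      rintro F ⟨w, hw_len, _, rfl⟩
      exact ⟨w, by simp [hw_len], rfl⟩
    exact ((SubshiftAux.finite_words_length_le A n).image _).subset this
  have hmem : ∀ (r : List A), r.length = n → (Follower X r).Nonempty →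
      Follower X r ∈ FollowerSets X n := by
    intro r hr hne
    exact ⟨r, hr, SubshiftAux.inLang_iff_nonempty.mpr hne, rfl⟩
  have hsub : {Follower X r₁, Follower X r₂, Follower X r₃} ⊆ FollowerSets X n := by
    intro F hF
    rcases hF with rfl | rfl | rfl
    · exact hmem r₁ h₁ hn₁
    · exact hmem r₂ h₂ hn₂
    · exact hmem r₃ h₃ hn₃
  have hcard : ({Follower X r₁, Follower X r₂, Follower X r₃} :
      Set (Set (ℕ → A))).ncard = 3 := by
    have hfin2 : ({Follower X r₂, Follower X r₃} : Set (Set (ℕ → A))).Finite :=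
      (Set.finite_singleton _).insert _
    rw [Set.ncard_insert_of_notMem (by simp [h12, h13]) hfin2, Set.ncard_pair h23]
  have := Set.ncard_le_ncard hsub hfin
  omega
end

section
/- Let X be a sofic subshift over a finite alphabet A (i.e., the collection {F_X(w) : w ∈ L(X)} of follower sets is finite), let 𝒲 ⊆ L(X) be a set of words such that every finite word v ∈ L(X) is a suffix of some w ∈ 𝒲, let c be a letter not in A, and let Y be the coded subshift over the alphabet A ∪ {c} with code words {wc : w ∈ 𝒲}. If there exists n ∈ ℕ, n ≥ 1, such that |F_Y(n)| ≤ n, then Y is sofic, i.e., the collection {F_Y(u) : u ∈ L(Y)} of all follower sets of words of Y is finite. -/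
/-- The discrete topology on `Option A`. -/
instance optionTopologicalSpace {A : Type*} : TopologicalSpace (Option A) := ⊥

instance optionDiscreteTopology {A : Type*} : DiscreteTopology (Option A) := ⟨rfl⟩

/-- `x` is a biinfinite concatenation of words from `W`. -/
def ConcatPoint {B : Type*} (W : Set (List B)) (x : ℤ → B) : Prop :=
  ∃ f : ℤ → ℤ, StrictMono f ∧ (∀ i : ℤ, ∃ n : ℤ, f n ≤ i ∧ i < f (n + 1)) ∧
    ∀ n : ℤ, ∃ w ∈ W, (w.length : ℤ) = f (n + 1) - f n ∧ WordAt x (f n) w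

/-- `Y` is the coded subshift with code words `W`: the smallest subshift containing
all biinfinite concatenations of words of `W`. -/
def IsCodedSubshift {B : Type*} [TopologicalSpace B] (W : Set (List B)) (Y : Set (ℤ → B)) : Prop :=
  IsSubshift Y ∧ {x | ConcatPoint W x} ⊆ Y ∧
    ∀ Z : Set (ℤ → B), IsSubshift Z → {x | ConcatPoint W x} ⊆ Z → Y ⊆ Z

namespace CodedProof

open Classical Set

variable {γ : Type*}

lemma xeq (x : ℤ → γ) {a b : ℤ} (h : a = b) : x a = x b := by rw [h]

/-- prepend a finite list to a ray -/
def rayApp (z : List γ) (t : ℕ → γ) : ℕ → γ := fun k =>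
  if h : k < z.length then z.get ⟨k, h⟩ else t (k - z.length)

lemma wordAt_nil (x : ℤ → γ) (i : ℤ) : WordAt x i ([] : List γ) := by
  intro k hk; simp at hk

lemma wordAt_append {x : ℤ → γ} {i : ℤ} {u v : List γ} :
    WordAt x i (u ++ v) ↔ WordAt x i u ∧ WordAt x (i + u.length) v := by
  constructor
  · intro H
    constructor
    · intro k hk
      have h2 : k < (u ++ v).length := by simp; omega
      have := H k h2
      rw [this]
      simp only [List.get_eq_getElem]
      exact List.getElem_append_left hk
    · intro k hk
      have h2 : u.length + k < (u ++ v).length := by simp; omega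
      have := H (u.length + k) h2
      have e : i + u.length + k = i + (u.length + k : ℕ) := by push_cast; ring
      rw [e, this]
      simp [List.get_eq_getElem]
  · rintro ⟨H1, H2⟩ k hk
    simp at hk
    by_cases hc : k < u.length
    · have := H1 k hc
      rw [this]
      simp only [List.get_eq_getElem]
      exact (List.getElem_append_left hc).symm
    · have hk2 : k - u.length < v.length := by omega
      have := H2 (k - u.length) hk2
      have e : i + u.length + (k - u.length : ℕ) = i + k := by
        have : (k - u.length : ℕ) = (k : ℤ) - u.length := by push_cast; omega
        rw [this]; ring
      rw [e] at this
      rw [this]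
      simp [List.get_eq_getElem]
      rw [List.getElem_append_right] <;> omega

lemma follower_append (S : Set (ℤ → γ)) (w z : List γ) :
    Follower S (w ++ z) = {t | rayApp z t ∈ Follower S w} := by
  ext t
  constructor
  · rintro ⟨x, hx, i, hw, ht⟩
    rw [wordAt_append] at hw
    refine ⟨x, hx, i, hw.1, ?_⟩
    intro k
    unfold rayApp
    by_cases h : k < z.length
    · simp only [dif_pos h]
      exact hw.2 k h
    · simp only [dif_neg h]
      have := ht (k - z.length)
      rw [← this]
      apply xeq
      simp
      push_cast
      omega
  · rintro ⟨x, hx, i, hw, ht⟩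
    refine ⟨x, hx, i, ?_, ?_⟩
    · rw [wordAt_append]
      refine ⟨hw, ?_⟩
      intro k hk
      have := ht k
      unfold rayApp at this
      rw [dif_pos hk] at this
      exact this
    · intro k
      have := ht (z.length + k)
      unfold rayApp at this
      rw [dif_neg (by omega)] at this
      simp at this
      rw [← this]
      apply xeq
      simp
      push_cast
      ring

lemma follower_congr_append {S : Set (ℤ → γ)} {w w' : List γ}
    (h : Follower S w = Follower S w') (z : List γ) :
    Follower S (w ++ z) = Follower S (w' ++ z) := by
  rw [follower_append, follower_append, h]

lemma follower_nonempty_iff {S : Set (ℤ → γ)} {w : List γ} :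
    (Follower S w).Nonempty ↔ InLang S w := by
  constructor
  · rintro ⟨t, x, hx, i, hw, -⟩
    exact ⟨x, hx, i, hw⟩
  · rintro ⟨x, hx, i, hw⟩
    exact ⟨fun k => x (i + w.length + k), x, hx, i, hw, fun k => rfl⟩

lemma inLang_append_left {S : Set (ℤ → γ)} {u v : List γ} (h : InLang S (u ++ v)) :
    InLang S u := by
  obtain ⟨x, hx, i, hw⟩ := h
  exact ⟨x, hx, i, (wordAt_append.1 hw).1⟩

lemma inLang_append_right {S : Set (ℤ → γ)} {u v : List γ} (h : InLang S (u ++ v)) :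
    InLang S v := by
  obtain ⟨x, hx, i, hw⟩ := h
  exact ⟨x, hx, i + u.length, (wordAt_append.1 hw).2⟩

lemma inLang_pad_left {S : Set (ℤ → γ)} {w : List γ} (m : ℕ) (h : InLang S w) :
    ∃ r : List γ, r.length = m ∧ InLang S (r ++ w) := by
  obtain ⟨x, hx, i, hw⟩ := h
  refine ⟨List.ofFn (fun k : Fin m => x (i - m + k)), by simp, x, hx, i - m, ?_⟩
  rw [wordAt_append]
  constructor
  · intro k hk
    simp only [List.get_eq_getElem, List.getElem_ofFn]
  · have e : i - m + (List.ofFn (fun k : Fin m => x (i - m + k))).length = i := by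
      simp
    rw [e]
    exact hw

section ShiftLemmas

variable [TopologicalSpace γ]

lemma shift_mem {S : Set (ℤ → γ)} (hS : IsSubshift S) (j : ℤ) {x : ℤ → γ}
    (hx : x ∈ S) : (fun i => x (i + j)) ∈ S := by
  induction j using Int.induction_on with
  | zero => simpa using hx
  | succ k ih =>
      have : (fun i => x (i + ((k : ℤ) + 1))) =
          (fun y : ℤ → γ => fun i => y (i + 1)) (fun i => x (i + (k : ℤ))) := by
        funext i
        simp only
        apply xeq
        ring
      rw [this, ← hS.2]
      exact Set.mem_image_of_mem _ ih
  | pred k ih =>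
      have h2 : (fun i => x (i + (-(k : ℤ)))) ∈
          (fun y : ℤ → γ => fun i => y (i + 1)) '' S := by rw [hS.2]; exact ih
      obtain ⟨z, hz, hze⟩ := h2
      have : z = fun i => x (i + (-(k : ℤ) - 1)) := by
        funext i
        have := congrFun hze (i - 1)
        simp only at this
        have e : i - 1 + 1 = i := by ring
        rw [e] at this
        rw [this]
        apply xeq
        ring
      rw [this] at hz
      have e2 : (fun i => x (i + (-(k : ℤ) - 1))) = (fun i => x (i + (-(k : ℤ) + -1))) := by
        funext i; apply xeq; ring
      rw [e2] at hz
      exact hz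

lemma inLang_at_zero {S : Set (ℤ → γ)} (hS : IsSubshift S) {w : List γ}
    (h : InLang S w) : ∃ x ∈ S, WordAt x 0 w := by
  obtain ⟨x, hx, i, hw⟩ := h
  refine ⟨fun k => x (k + i), shift_mem hS i hx, ?_⟩
  intro k hk
  have := hw k hk
  rw [← this]
  apply xeq
  ring

end ShiftLemmas

section ClosureWindow

variable [TopologicalSpace γ] [DiscreteTopology γ]

lemma mem_closure_iff_window {S : Set (ℤ → γ)} {x : ℤ → γ} :
    x ∈ closure S ↔ ∀ N : ℕ, ∃ y ∈ S, ∀ i : ℤ, |i| ≤ (N : ℤ) → y i = x i := by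
  constructor
  · intro hx N
    have hset : {y : ℤ → γ | ∀ i : ℤ, |i| ≤ (N : ℤ) → y i = x i} =
        Set.pi {i : ℤ | |i| ≤ (N : ℤ)} (fun i => {x i}) := by
      ext y
      simp [Set.mem_pi]
    have hopen : IsOpen {y : ℤ → γ | ∀ i : ℤ, |i| ≤ (N : ℤ) → y i = x i} := by
      rw [hset]
      apply isOpen_set_pi
      · have : {i : ℤ | |i| ≤ (N : ℤ)} = Set.Icc (-(N : ℤ)) N := by
          ext i; simp [abs_le]
        rw [this]
        exact Set.finite_Icc _ _
      · intro i _
        exact isOpen_discrete _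
    obtain ⟨y, hy1, hy2⟩ := mem_closure_iff.1 hx _ hopen (fun i hi => rfl)
    exact ⟨y, hy2, hy1⟩
  · intro H
    rw [mem_closure_iff]
    intro U hU hxU
    obtain ⟨I, u, h1, h2⟩ := isOpen_pi_iff.1 hU x hxU
    obtain ⟨y, hyS, hy⟩ := H (I.sup (fun i => i.natAbs))
    refine ⟨y, h2 ?_, hyS⟩
    intro i hi
    have hyi : y i = x i := by
      apply hy
      rw [Int.abs_eq_natAbs]
      exact_mod_cast Finset.le_sup (f := fun i : ℤ => i.natAbs) hi
    rw [hyi]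
    exact (h1 i hi).2

end ClosureWindow

section Finiteness

lemma finite_lists_length_eq [Finite γ] : ∀ n : ℕ, {l : List γ | l.length = n}.Finite
  | 0 => by
      have : {l : List γ | l.length = 0} = {([] : List γ)} := by
        ext l; simp [List.length_eq_zero_iff]
      rw [this]; exact Set.finite_singleton _
  | (n + 1) => by
      have hsub : {l : List γ | l.length = n + 1} ⊆
          Set.image2 List.cons Set.univ {l : List γ | l.length = n} := by
        intro l hl
        match l with
        | [] => simp at hl
        | a :: t => exact ⟨a, trivial, t, by simpa using hl, rfl⟩
      exact (Set.Finite.image2 _ Set.finite_univ (finite_lists_length_eq n)).subset hsub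

lemma finite_lists_length_le [Finite γ] (n : ℕ) : {l : List γ | l.length ≤ n}.Finite := by
  have : {l : List γ | l.length ≤ n} ⊆ ⋃ k : Fin (n + 1), {l : List γ | l.length = (k : ℕ)} := by
    intro l hl
    simp only [Set.mem_iUnion]
    exact ⟨⟨l.length, by simp at hl; omega⟩, rfl⟩
  exact (Set.finite_iUnion (fun k => finite_lists_length_eq _)).subset this

lemma pigeonhole {α : Type*} {S : Set α} (hfin : S.Finite) {n : ℕ} (hcard : S.ncard ≤ n)
    (g : Fin (n + 1) → α) (hg : ∀ k, g k ∈ S) :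
    ∃ i j : Fin (n + 1), i < j ∧ g i = g j := by
  have hc : hfin.toFinset.card < (Finset.univ : Finset (Fin (n + 1))).card := by
    rw [Finset.card_univ, Fintype.card_fin]
    rw [Set.ncard_eq_toFinset_card S hfin] at hcard
    omega
  obtain ⟨i, -, j, -, hne, he⟩ := Finset.exists_ne_map_eq_of_card_lt_of_maps_to hc
    (fun a _ => hfin.mem_toFinset.2 (hg a))
  rcases lt_or_gt_of_ne hne with hlt | hgt
  · exact ⟨i, j, hlt, he⟩
  · exact ⟨j, i, hgt, he.symm⟩

end Finiteness

section Coded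

variable {A : Type*}

/-- the code words -/
def CW (W : Set (List A)) : Set (List (Option A)) :=
  (fun w : List A => w.map some ++ [none]) '' W

lemma concat_shift {V : Set (List γ)} (j : ℤ) {x : ℤ → γ} (hx : ConcatPoint V x) :
    ConcatPoint V (fun i => x (i + j)) := by
  obtain ⟨f, hmono, hcov, hblk⟩ := hx
  refine ⟨fun n => f n - j, ?_, ?_, ?_⟩
  · intro a b hab
    have := hmono hab
    dsimp only
    omega
  · intro i
    obtain ⟨n, h1, h2⟩ := hcov (i + j)
    exact ⟨n, by dsimp only; omega, by dsimp only; omega⟩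
  · intro n
    obtain ⟨w, hw, hlen, hword⟩ := hblk n
    refine ⟨w, hw, by dsimp only; omega, ?_⟩
    intro k hk
    have := hword k hk
    rw [← this]
    apply xeq
    ring

/-- shift as a homeomorphism -/
def shiftHomeo (γ : Type*) [TopologicalSpace γ] : (ℤ → γ) ≃ₜ (ℤ → γ) where
  toFun := fun x i => x (i + 1)
  invFun := fun x i => x (i - 1)
  left_inv := by intro x; funext i; simp
  right_inv := by intro x; funext i; simp
  continuous_toFun := continuous_pi fun i => continuous_apply (i + 1)
  continuous_invFun := continuous_pi fun i => continuous_apply (i - 1)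

lemma closure_concat_subshift [TopologicalSpace γ] [DiscreteTopology γ] (V : Set (List γ)) :
    IsSubshift (closure {x : ℤ → γ | ConcatPoint V x}) := by
  constructor
  · exact isClosed_closure
  · have himg : (fun x : ℤ → γ => fun i => x (i + 1)) '' {x : ℤ → γ | ConcatPoint V x} =
        {x : ℤ → γ | ConcatPoint V x} := by
      apply Set.Subset.antisymm
      · rintro y ⟨x, hx, rfl⟩
        exact concat_shift 1 hx
      · intro x hx
        refine ⟨fun i => x (i + (-1)), concat_shift (-1) hx, ?_⟩
        funext i
        simp only
        apply xeq
        ring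
    have := (shiftHomeo γ).image_closure {x : ℤ → γ | ConcatPoint V x}
    have he : ⇑(shiftHomeo γ) = (fun x : ℤ → γ => fun i => x (i + 1)) := rfl
    rw [he] at this
    rw [this, himg]

lemma Y_eq_closure {W : Set (List A)} {Y : Set (ℤ → Option A)}
    (hY : IsCodedSubshift ((fun w : List A => w.map some ++ [none]) '' W) Y) :
    Y = closure {x : ℤ → Option A | ConcatPoint (CW W) x} := by
  have h1 : Y ⊆ closure {x : ℤ → Option A | ConcatPoint (CW W) x} :=
    hY.2.2 _ (closure_concat_subshift (CW W)) subset_closure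
  have h2 : closure {x : ℤ → Option A | ConcatPoint (CW W) x} ⊆ Y :=
    closure_minimal hY.2.1 hY.1.1
  exact Set.Subset.antisymm h1 h2

/-- in a concatenation point, every occurrence of `none` is at the end of a block -/
lemma none_block_end {W : Set (List A)} {a : ℤ → Option A} {f : ℤ → ℤ}
    (hmono : StrictMono f) (hcov : ∀ i : ℤ, ∃ n : ℤ, f n ≤ i ∧ i < f (n + 1))
    (hblk : ∀ n : ℤ, ∃ w ∈ CW W, (w.length : ℤ) = f (n + 1) - f n ∧ WordAt a (f n) w)
    {p : ℤ} (hp : a p = none) : ∃ m : ℤ, f (m + 1) = p + 1 := by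
  obtain ⟨m, h1, h2⟩ := hcov p
  obtain ⟨w, hw, hlen, hword⟩ := hblk m
  obtain ⟨ω, hΩ, rfl⟩ := hw
  set k : ℕ := (p - f m).toNat with hk
  have hkeq : (k : ℤ) = p - f m := by omega
  have hklt : k < (ω.map some ++ [none]).length := by
    simp only [List.length_append, List.length_map, List.length_cons, List.length_nil]
    simp only [List.length_append, List.length_map, List.length_cons, List.length_nil] at hlen
    omega
  have := hword k hklt
  have he : f m + (k : ℤ) = p := by omega
  rw [he, hp] at this
  -- this : none = (ω.map some ++ [none]).get ⟨k, hklt⟩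
  have hkval : k = ω.length := by
    by_contra hne
    have hklt2 : k < ω.length := by
      simp only [List.length_append, List.length_map, List.length_cons, List.length_nil] at hklt
      omega
    rw [List.get_eq_getElem, List.getElem_append_left (by simpa using hklt2)] at this
    simp at this
  use m
  simp only [List.length_append, List.length_map, List.length_cons, List.length_nil] at hlen
  omega

/-- splicing two concatenation points at occurrences of `none` -/
lemma concat_splice {W : Set (List A)} {a a' : ℤ → Option A}
    (ha : ConcatPoint (CW W) a) (ha' : ConcatPoint (CW W) a')
    {p q : ℤ} (hp : a p = none) (hq : a' q = none) :
    ConcatPoint (CW W) (fun i => if i ≤ q then a' i else a (i - q + p)) := by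
  obtain ⟨f, hmono, hcov, hblk⟩ := ha
  obtain ⟨f', hmono', hcov', hblk'⟩ := ha'
  obtain ⟨m, hm⟩ := none_block_end hmono hcov hblk hp
  obtain ⟨m', hm'⟩ := none_block_end hmono' hcov' hblk' hq
  set g : ℤ → ℤ := fun j => if j ≤ 0 then f' (j + (m' + 1)) else f (j + (m + 1)) + (q - p)
    with hg
  have hg_nonpos : ∀ j : ℤ, j ≤ 0 → g j = f' (j + (m' + 1)) := by
    intro j hj; simp only [hg, if_pos hj]
  have hg_nonneg : ∀ j : ℤ, 0 ≤ j → g j = f (j + (m + 1)) + (q - p) := by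
    intro j hj
    rcases eq_or_lt_of_le hj with hj0 | hj0
    · subst hj0
      simp only [hg]
      rw [if_pos le_rfl]
      simp only [zero_add]
      omega
    · simp only [hg, if_neg (by omega : ¬ j ≤ 0)]
  refine ⟨g, ?_, ?_, ?_⟩
  · apply strictMono_int_of_lt_succ
    intro j
    rcases le_or_gt (j + 1) 0 with hj | hj
    · rw [hg_nonpos j (by omega), hg_nonpos (j + 1) hj]
      exact hmono' (by omega)
    · rw [hg_nonneg (j + 1) (by omega)]
      rcases le_or_gt j 0 with hj2 | hj2
      · rw [hg_nonpos j hj2]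
        have h1 : f' (j + (m' + 1)) ≤ f' (m' + 1) := hmono'.le_iff_le.2 (by omega)
        have h2 : f (m + 1) < f (j + 1 + (m + 1)) := hmono (by omega)
        omega
      · rw [hg_nonneg j (by omega)]
        have := hmono (by omega : j + (m + 1) < j + 1 + (m + 1))
        omega
  · intro i
    rcases le_or_gt i q with hi | hi
    · obtain ⟨u, h1, h2⟩ := hcov' i
      have hu : u + 1 ≤ m' + 1 := by
        by_contra hcon
        have : f' (m' + 1) ≤ f' u := hmono'.le_iff_le.2 (by omega)
        omega
      refine ⟨u - (m' + 1), ?_, ?_⟩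
      · rw [hg_nonpos _ (by omega)]
        have e : u - (m' + 1) + (m' + 1) = u := by ring
        rw [e]; exact h1
      · rw [hg_nonpos _ (by omega)]
        have e : u - (m' + 1) + 1 + (m' + 1) = u + 1 := by ring
        rw [e]; exact h2
    · obtain ⟨u, h1, h2⟩ := hcov (i - q + p)
      have hu : m + 1 ≤ u := by
        by_contra hcon
        have : f (u + 1) ≤ f (m + 1) := hmono.le_iff_le.2 (by omega)
        omega
      refine ⟨u - (m + 1), ?_, ?_⟩
      · rw [hg_nonneg _ (by omega)]
        have e : u - (m + 1) + (m + 1) = u := by ring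
        rw [e]; omega
      · rw [hg_nonneg _ (by omega)]
        have e : u - (m + 1) + 1 + (m + 1) = u + 1 := by ring
        rw [e]; omega
  · intro j
    rcases le_or_gt j (-1) with hj | hj
    · obtain ⟨w, hw, hlen, hword⟩ := hblk' (j + (m' + 1))
      refine ⟨w, hw, ?_, ?_⟩
      · rw [hg_nonpos j (by omega), hg_nonpos (j + 1) (by omega)]
        have e : j + 1 + (m' + 1) = j + (m' + 1) + 1 := by ring
        rw [e, ← hlen]
      · intro k hk
        have hval := hword k hk
        have hpos : f' (j + (m' + 1)) + (k : ℤ) ≤ q := by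
          have hb : f' (j + (m' + 1)) + (w.length : ℤ) = f' (j + (m' + 1) + 1) := by omega
          have hc : f' (j + (m' + 1) + 1) ≤ f' (m' + 1) := hmono'.le_iff_le.2 (by omega)
          omega
        show (if g j + (k : ℤ) ≤ q then a' (g j + (k : ℤ))
          else a (g j + (k : ℤ) - q + p)) = w.get ⟨k, hk⟩
        rw [hg_nonpos j (by omega), if_pos hpos]
        exact hval
    · obtain ⟨w, hw, hlen, hword⟩ := hblk (j + (m + 1))
      refine ⟨w, hw, ?_, ?_⟩
      · rw [hg_nonneg j (by omega), hg_nonneg (j + 1) (by omega)]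
        have e : j + 1 + (m + 1) = j + (m + 1) + 1 := by ring
        rw [e]
        omega
      · intro k hk
        have hval := hword k hk
        have hgj : g j = f (j + (m + 1)) + (q - p) := hg_nonneg j (by omega)
        have hfj : f (m + 1) ≤ f (j + (m + 1)) := hmono.le_iff_le.2 (by omega)
        have hpos : ¬ (g j + (k : ℤ) ≤ q) := by omega
        show (if g j + (k : ℤ) ≤ q then a' (g j + (k : ℤ))
          else a (g j + (k : ℤ) - q + p)) = w.get ⟨k, hk⟩
        rw [if_neg hpos]
        rw [← hval]
        apply xeq
        omega

end Coded

section Main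

variable {A : Type*} [Fintype A] [TopologicalSpace A] [DiscreteTopology A]
variable {X : Set (ℤ → A)} {W : Set (List A)} {Y : Set (ℤ → Option A)}

lemma splice_mem_Y (hY : IsCodedSubshift ((fun w : List A => w.map some ++ [none]) '' W) Y)
    {x x' : ℤ → Option A} (hx : x ∈ Y) (hx' : x' ∈ Y) {p q : ℤ}
    (hp : x p = none) (hq : x' q = none) :
    (fun i => if i ≤ q then x' i else x (i - q + p)) ∈ Y := by
  have hcl := Y_eq_closure hY
  rw [hcl] at hx hx' ⊢
  rw [mem_closure_iff_window] at hx hx' ⊢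
  intro N
  obtain ⟨a, haC, haw⟩ := hx (N + p.natAbs + q.natAbs)
  obtain ⟨a', haC', haw'⟩ := hx' (N + p.natAbs + q.natAbs)
  have hap : a p = none := by
    rw [haw p (by rw [abs_le]; omega)]; exact hp
  have haq : a' q = none := by
    rw [haw' q (by rw [abs_le]; omega)]; exact hq
  refine ⟨_, concat_splice haC haC' hap haq, ?_⟩
  intro i hi
  rw [abs_le] at hi
  show (if i ≤ q then a' i else a (i - q + p)) = (if i ≤ q then x' i else x (i - q + p))
  rcases le_or_gt i q with hle | hlt
  · rw [if_pos hle, if_pos hle]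
    exact haw' i (by rw [abs_le]; omega)
  · rw [if_neg (by omega), if_neg (by omega)]
    exact haw (i - q + p) (by rw [abs_le]; omega)

lemma code_get_last (ω : List A) (h : ω.length < (ω.map some ++ [none]).length) :
    (ω.map some ++ [none]).get ⟨ω.length, h⟩ = none := by
  simp only [List.get_eq_getElem]
  rw [List.getElem_append_right (by simp)]
  simp

lemma periodic_point {ω : List A} (hω : ω ∈ W) :
    ∃ P : ℤ → Option A, ConcatPoint (CW W) P ∧ WordAt P 0 (ω.map some ++ [none]) := by
  classical
  set l : List (Option A) := ω.map some ++ [none] with hl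
  have hT0 : 0 < l.length := by simp [hl]
  set T : ℤ := (l.length : ℤ) with hTdef
  have hTpos : 0 < T := by omega
  have hidx : ∀ i : ℤ, (i % T).toNat < l.length := by
    intro i
    have h1 : 0 ≤ i % T := Int.emod_nonneg i (by omega)
    have h2 : i % T < T := Int.emod_lt_of_pos i hTpos
    omega
  set P : ℤ → Option A := fun i => l.get ⟨(i % T).toNat, hidx i⟩ with hP
  have hword : ∀ n : ℤ, WordAt P (n * T) l := by
    intro n k hk
    have he : (n * T + (k : ℤ)) % T = (k : ℤ) := by
      have e1 : n * T + (k : ℤ) = (k : ℤ) + T * n := by ring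
      rw [e1, Int.add_mul_emod_self_left]
      exact Int.emod_eq_of_lt (by omega) (by omega)
    have hidxeq : ((n * T + (k : ℤ)) % T).toNat = k := by rw [he]; omega
    show l.get ⟨((n * T + (k : ℤ)) % T).toNat, hidx _⟩ = l.get ⟨k, hk⟩
    congr 1
    exact Fin.ext hidxeq
  refine ⟨P, ⟨fun n => n * T, ?_, ?_, ?_⟩, ?_⟩
  · apply strictMono_int_of_lt_succ
    intro n
    have e : (n + 1) * T = n * T + T := by ring
    omega
  · intro i
    refine ⟨i / T, ?_, ?_⟩
    · dsimp only
      have h0 := Int.mul_ediv_add_emod i T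
      have h1 : 0 ≤ i % T := Int.emod_nonneg i (by omega)
      have e1 : (i / T) * T = T * (i / T) := by ring
      rw [e1]
      omega
    · dsimp only
      have h0 := Int.mul_ediv_add_emod i T
      have h2 : i % T < T := Int.emod_lt_of_pos i hTpos
      have e2 : (i / T + 1) * T = T * (i / T) + T := by ring
      rw [e2]
      omega
  · intro n
    refine ⟨l, ⟨ω, hω, rfl⟩, ?_, hword n⟩
    dsimp only
    have e : (n + 1) * T - n * T = T := by ring
    rw [e]
  · have := hword 0
    rw [zero_mul] at this
    exact this

lemma exists_unmap : ∀ {w : List (Option A)}, (none ∉ w) → ∃ wh : List A, w = wh.map some := by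
  intro w
  induction w with
  | nil => exact fun _ => ⟨[], rfl⟩
  | cons a t ih =>
      intro h
      simp only [List.mem_cons] at h
      push_neg at h
      obtain ⟨wh, rfl⟩ := ih h.2
      match a, h.1 with
      | some b, _ => exact ⟨b :: wh, rfl⟩

lemma inLang_concat_approx (hY : IsCodedSubshift ((fun w : List A => w.map some ++ [none]) '' W) Y)
    {w : List (Option A)} (hw : InLang Y w) :
    ∃ a, ConcatPoint (CW W) a ∧ ∃ i : ℤ, WordAt a i w := by
  obtain ⟨y, hyY, i, hword⟩ := hw
  have : y ∈ closure {x : ℤ → Option A | ConcatPoint (CW W) x} := by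
    rw [← Y_eq_closure hY]; exact hyY
  rw [mem_closure_iff_window] at this
  obtain ⟨a, haC, haw⟩ := this (i.natAbs + w.length)
  refine ⟨a, haC, i, ?_⟩
  intro k hk
  rw [haw (i + k) (by rw [abs_le]; omega)]
  exact hword k hk

lemma cless_lang (hY : IsCodedSubshift ((fun w : List A => w.map some ++ [none]) '' W) Y)
    (hWL : ∀ w ∈ W, InLang X w) (hXne : X.Nonempty)
    {w : List (Option A)} (hw : InLang Y w) (hnone : none ∉ w) :
    ∃ wh : List A, w = wh.map some ∧ InLang X wh := by
  obtain ⟨wh, rfl⟩ := exists_unmap hnone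
  refine ⟨wh, rfl, ?_⟩
  rcases Nat.eq_zero_or_pos wh.length with hz | hpos
  · obtain ⟨x, hx⟩ := hXne
    exact ⟨x, hx, 0, by
      intro k hk
      omega⟩
  obtain ⟨a, haC, i, hword⟩ := inLang_concat_approx hY hw
  obtain ⟨f, hmono, hcov, hblk⟩ := haC
  obtain ⟨m, h1, h2⟩ := hcov i
  obtain ⟨wm, hwm, hlen, hwordm⟩ := hblk m
  obtain ⟨ω, hΩ, rfl⟩ := hwm
  dsimp only at hlen hwordm
  have hlen' : (ω.length : ℤ) + 1 = f (m + 1) - f m := by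
    simp only [List.length_append, List.length_map, List.length_cons, List.length_nil] at hlen
    omega
  have hnone2 : a (f (m + 1) - 1) = none := by
    have hkl : ω.length < (ω.map some ++ [none]).length := by simp
    have := hwordm ω.length hkl
    rw [code_get_last ω hkl] at this
    rw [← this]
    apply xeq
    omega
  have hub : i + (wh.length : ℤ) ≤ f (m + 1) - 1 := by
    by_contra hcon
    set k : ℕ := (f (m + 1) - 1 - i).toNat with hk
    have hklt : k < (wh.map some).length := by simp; omega
    have hv := hword k hklt
    have e : i + (k : ℤ) = f (m + 1) - 1 := by omega
    rw [e, hnone2] at hv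
    simp only [List.get_eq_getElem, List.getElem_map] at hv
    simp at hv
  set d : ℕ := (i - f m).toNat with hd
  have hdi : (d : ℤ) = i - f m := by omega
  have hbound : ∀ k : ℕ, k < wh.length → d + k < ω.length := by
    intro k hk
    omega
  have hkey : ∀ k : ℕ, (hk : k < wh.length) →
      wh.get ⟨k, hk⟩ = ω.get ⟨d + k, hbound k hk⟩ := by
    intro k hk
    have hklt : k < (wh.map some).length := by simpa using hk
    have hv := hword k hklt
    have hblt : d + k < (ω.map some ++ [none]).length := by simp; omega
    have hv2 := hwordm (d + k) hblt
    have e : f m + ((d + k : ℕ) : ℤ) = i + (k : ℤ) := by push_cast; omega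
    rw [e] at hv2
    rw [hv2] at hv
    simp only [List.get_eq_getElem, List.getElem_map] at hv
    rw [List.getElem_append_left (by simpa using hbound k hk)] at hv
    simp only [List.getElem_map] at hv
    simp only [List.get_eq_getElem]
    exact Option.some_injective _ hv.symm
  obtain ⟨x, hx, i0, hwx⟩ := hWL ω hΩ
  refine ⟨x, hx, i0 + d, ?_⟩
  intro k hk
  have := hwx (d + k) (hbound k hk)
  rw [hkey k hk]
  rw [← this]
  apply xeq
  push_cast
  ring

lemma wordAt_singleton {x : ℤ → γ} {i : ℤ} {b : γ} : WordAt x i [b] ↔ x i = b := by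
  constructor
  · intro H
    have := H 0 (by simp)
    simpa using this
  · intro H k hk
    simp only [List.length_singleton] at hk
    interval_cases k
    simpa using H

lemma wordAt_cons {x : ℤ → γ} {i : ℤ} {b : γ} {v : List γ} :
    WordAt x i (b :: v) ↔ x i = b ∧ WordAt x (i + 1) v := by
  rw [show b :: v = [b] ++ v from rfl, wordAt_append, wordAt_singleton]
  simp

lemma ofFn_succ_ray (t : ℕ → γ) (k : ℕ) :
    (List.ofFn fun j : Fin (k + 1) => t j) = (List.ofFn fun j : Fin k => t j) ++ [t k] := by
  apply List.ext_getElem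
  · simp
  · intro i h1 h2
    simp only [List.getElem_ofFn]
    rcases lt_or_ge i k with hik | hik
    · rw [List.getElem_append_left (by simpa using hik)]
      simp
    · have hik2 : i = k := by simp at h1; omega
      subst hik2
      rw [List.getElem_append_right (by simp)]
      simp

lemma wordAt_closed [TopologicalSpace γ] [DiscreteTopology γ] (l : List γ) (i : ℤ) :
    IsClosed {x : ℤ → γ | WordAt x i l} := by
  have he : {x : ℤ → γ | WordAt x i l} =
      ⋂ (j : Fin l.length), (fun x : ℤ → γ => x (i + (j : ℕ))) ⁻¹' {l.get j} := by
    ext x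
    simp only [Set.mem_iInter, Set.mem_preimage, Set.mem_singleton_iff, Set.mem_setOf_eq]
    constructor
    · intro H j
      exact H j j.2
    · intro H k hk
      exact H ⟨k, hk⟩
  rw [he]
  exact isClosed_iInter fun j =>
    IsClosed.preimage (continuous_apply _) isClosed_singleton

end Main

section Main2

variable {A : Type*} [Fintype A] [TopologicalSpace A] [DiscreteTopology A]
variable {X : Set (ℤ → A)} {W : Set (List A)} {Y : Set (ℤ → Option A)}

lemma X_subset_Y (hY : IsCodedSubshift ((fun w : List A => w.map some ++ [none]) '' W) Y)
    (hsuf : ∀ v : List A, InLang X v → ∃ w ∈ W, v <:+ w)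
    {x : ℤ → A} (hx : x ∈ X) : (fun i => (some (x i) : Option A)) ∈ Y := by
  rw [Y_eq_closure hY, mem_closure_iff_window]
  intro N
  set wh : List A := List.ofFn (fun k : Fin (2 * N + 1) => x (-(N : ℤ) + (k : ℕ))) with hwh
  have hlang : InLang X wh := by
    refine ⟨x, hx, -(N : ℤ), ?_⟩
    intro k hk
    simp only [hwh, List.get_eq_getElem, List.getElem_ofFn]
  obtain ⟨ω, hΩ, hsuffix⟩ := hsuf wh hlang
  obtain ⟨y0, hy0⟩ := hsuffix
  obtain ⟨P, hPC, hPw⟩ := periodic_point hΩ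
  have hPword : WordAt P (y0.length) (wh.map some) := by
    rw [← hy0, List.map_append, List.append_assoc] at hPw
    have h2 := (wordAt_append.1 hPw).2
    rw [zero_add] at h2
    have h3 := (wordAt_append.1 h2).1
    simpa using h3
  refine ⟨fun i => P (i + ((y0.length : ℤ) + N)), concat_shift _ hPC, ?_⟩
  intro i hi
  rw [abs_le] at hi
  set k : ℕ := (i + N).toNat with hk
  have hklt : k < (wh.map some).length := by
    simp only [hwh, List.length_map, List.length_ofFn]
    omega
  have hval := hPword k hklt
  have e : (y0.length : ℤ) + (k : ℤ) = i + ((y0.length : ℤ) + N) := by omega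
  rw [e] at hval
  show P (i + ((y0.length : ℤ) + N)) = some (x i)
  rw [hval]
  simp only [hwh, List.get_eq_getElem, List.getElem_map, List.getElem_ofFn]
  congr 1
  apply xeq
  omega

lemma follower_compact (hX : IsSubshift X) {u : List A} (t : ℕ → A)
    (h : ∀ k : ℕ, InLang X (u ++ List.ofFn (fun j : Fin k => t (j : ℕ)))) :
    t ∈ Follower X u := by
  haveI : CompactSpace A := Finite.compactSpace
  set C : ℕ → Set (ℤ → A) :=
    fun k => X ∩ {x | WordAt x 0 (u ++ List.ofFn (fun j : Fin k => t (j : ℕ)))} with hC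
  have hsub : ∀ k, C (k + 1) ⊆ C k := by
    intro k x hx
    refine ⟨hx.1, ?_⟩
    have h2 := hx.2
    simp only [Set.mem_setOf_eq] at h2 ⊢
    rw [ofFn_succ_ray, ← List.append_assoc] at h2
    exact (wordAt_append.1 h2).1
  have hne : ∀ k, (C k).Nonempty := by
    intro k
    obtain ⟨x, hx, hw⟩ := inLang_at_zero hX (h k)
    exact ⟨x, hx, hw⟩
  have hclosed : ∀ k, IsClosed (C k) := fun k =>
    IsClosed.inter hX.1 (wordAt_closed _ _)
  have hcompact : IsCompact (C 0) := (hclosed 0).isCompact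
  obtain ⟨x, hxmem⟩ :=
    IsCompact.nonempty_iInter_of_sequence_nonempty_isCompact_isClosed C hsub hne hcompact hclosed
  simp only [Set.mem_iInter] at hxmem
  have hx0 : x ∈ X := (hxmem 0).1
  have hwu : WordAt x 0 u := by
    have := (hxmem 0).2
    simp only [Set.mem_setOf_eq] at this
    simpa using this
  refine ⟨x, hx0, 0, hwu, ?_⟩
  intro k
  have := (hxmem (k + 1)).2
  simp only [Set.mem_setOf_eq] at this
  have h2 := (wordAt_append.1 this).2
  have hklt : k < (List.ofFn (fun j : Fin (k + 1) => t (j : ℕ))).length := by simp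
  have h3 := h2 k hklt
  rw [h3]
  simp only [List.get_eq_getElem, List.getElem_ofFn]

end Main2

section Main3

variable {A : Type*} [Fintype A] [TopologicalSpace A] [DiscreteTopology A]
variable {X : Set (ℤ → A)} {W : Set (List A)} {Y : Set (ℤ → Option A)}

lemma follower_reset (hY : IsCodedSubshift ((fun w : List A => w.map some ++ [none]) '' W) Y)
    {r v : List (Option A)} (hr : InLang Y (r ++ none :: v)) :
    Follower Y (r ++ none :: v) = Follower Y (none :: v) := by
  apply Set.Subset.antisymm
  · rintro t ⟨y, hy, i, hw, ht⟩
    rw [wordAt_append] at hw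
    refine ⟨y, hy, i + r.length, hw.2, ?_⟩
    intro k
    rw [← ht k]
    apply xeq
    push_cast [List.length_append, List.length_cons]
    ring
  · rintro t ⟨y2, hy2, i2, hw2, ht2⟩
    obtain ⟨y1, hy1, i1, hw1⟩ := hr
    rw [wordAt_append, wordAt_cons] at hw1
    have hp : y1 (i1 + r.length) = none := hw1.2.1
    have hq : y2 i2 = none := (wordAt_cons.1 hw2).1
    have hL : ((r ++ none :: v).length : ℤ) = (r.length : ℤ) + 1 + v.length := by
      push_cast [List.length_append, List.length_cons]; ring
    have hL2 : ((none :: v).length : ℤ) = 1 + (v.length : ℤ) := by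
      push_cast [List.length_cons]; ring
    refine ⟨fun j => if j ≤ i1 + (r.length : ℤ) then y1 j else y2 (j - (i1 + r.length) + i2),
      splice_mem_Y hY hy2 hy1 hq hp, i1, ?_, ?_⟩
    · rw [wordAt_append, wordAt_cons]
      refine ⟨?_, ?_, ?_⟩
      · intro k hk
        show (if i1 + (k : ℤ) ≤ i1 + (r.length : ℤ) then y1 (i1 + (k : ℤ))
          else y2 (i1 + (k : ℤ) - (i1 + r.length) + i2)) = r.get ⟨k, hk⟩
        rw [if_pos (by omega)]
        exact hw1.1 k hk
      · show (if i1 + (r.length : ℤ) ≤ i1 + (r.length : ℤ) then y1 (i1 + (r.length : ℤ))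
          else y2 (i1 + (r.length : ℤ) - (i1 + r.length) + i2)) = none
        rw [if_pos le_rfl]
        exact hp
      · intro k hk
        show (if i1 + (r.length : ℤ) + 1 + (k : ℤ) ≤ i1 + (r.length : ℤ) then
            y1 (i1 + (r.length : ℤ) + 1 + (k : ℤ))
          else y2 (i1 + (r.length : ℤ) + 1 + (k : ℤ) - (i1 + r.length) + i2)) = v.get ⟨k, hk⟩
        rw [if_neg (by omega)]
        have := (wordAt_cons.1 hw2).2 k hk
        rw [← this]
        apply xeq
        omega
    · intro k
      show (if i1 + ((r ++ none :: v).length : ℤ) + (k : ℤ) ≤ i1 + (r.length : ℤ) then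
          y1 (i1 + ((r ++ none :: v).length : ℤ) + (k : ℤ))
        else y2 (i1 + ((r ++ none :: v).length : ℤ) + (k : ℤ) - (i1 + r.length) + i2)) = t k
      rw [if_neg (by omega)]
      rw [← ht2 k]
      apply xeq
      omega

end Main3

section Main4

variable {A : Type*} [Fintype A] [TopologicalSpace A] [DiscreteTopology A]
variable {X : Set (ℤ → A)} {W : Set (List A)} {Y : Set (ℤ → Option A)}

lemma map_some_inj {l1 l2 : List A} (h : l1.map some = l2.map some) : l1 = l2 :=
  List.map_injective_iff.2 (Option.some_injective A) h

lemma cless_transfer (hY : IsCodedSubshift ((fun w : List A => w.map some ++ [none]) '' W) Y)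
    (hX : IsSubshift X) (hXne : X.Nonempty)
    (hWL : ∀ w ∈ W, InLang X w)
    (hsuf : ∀ v : List A, InLang X v → ∃ w ∈ W, v <:+ w)
    {u1 u2 : List A}
    (hf : Follower X u1 = Follower X u2) :
    Follower Y (u1.map some) ⊆ Follower Y (u2.map some) := by
  rintro t ⟨y, hy, i, hw, ht⟩
  have hmlen : ((u1.map some).length : ℤ) = (u1.length : ℤ) := by simp
  by_cases hcase : ∀ d : ℕ, t d ≠ none
  · -- t contains no `none`
    have hchoice : ∀ d : ℕ, ∃ b : A, t d = some b := by
      intro d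
      cases htd : t d with
      | none => exact absurd htd (hcase d)
      | some b => exact ⟨b, rfl⟩
    choose tA htA using hchoice
    have hpre : ∀ k : ℕ, InLang X (u1 ++ List.ofFn (fun j : Fin k => tA (j : ℕ))) := by
      intro k
      have hwordY : WordAt y i ((u1 ++ List.ofFn (fun j : Fin k => tA (j : ℕ))).map some) := by
        rw [List.map_append, wordAt_append]
        refine ⟨hw, ?_⟩
        intro j hj
        have hjlen : j < k := by simpa using hj
        have hval := ht j
        have e : i + ((u1.map some).length : ℤ) + (j : ℤ) = i + (u1.map some).length + j := rfl
        rw [htA j] at hval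
        rw [hval]
        simp only [List.get_eq_getElem, List.getElem_map, List.getElem_ofFn]
      have hin : InLang Y ((u1 ++ List.ofFn (fun j : Fin k => tA (j : ℕ))).map some) :=
        ⟨y, hy, i, hwordY⟩
      have hnone : (none : Option A) ∉ (u1 ++ List.ofFn (fun j : Fin k => tA (j : ℕ))).map some := by
        simp [List.mem_ofFn, Function.comp]
      obtain ⟨wh, hweq, hwl⟩ := cless_lang hY hWL hXne hin hnone
      have : u1 ++ List.ofFn (fun j : Fin k => tA (j : ℕ)) = wh := map_some_inj hweq
      rwa [this]
    have htF : tA ∈ Follower X u1 := follower_compact hX tA hpre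
    rw [hf] at htF
    obtain ⟨x2, hx2, j2, hwx2, htx2⟩ := htF
    refine ⟨fun i => some (x2 i), X_subset_Y hY hsuf hx2, j2, ?_, ?_⟩
    · intro k hk
      have hk2 : k < u2.length := by simpa using hk
      show some (x2 (j2 + (k : ℤ))) = (u2.map some).get ⟨k, hk⟩
      rw [hwx2 k hk2]
      simp [List.get_eq_getElem]
    · intro k
      show some (x2 (j2 + ((u2.map some).length : ℤ) + (k : ℤ))) = t k
      have e : j2 + ((u2.map some).length : ℤ) + (k : ℤ) = j2 + (u2.length : ℤ) + k := by
        simp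
      rw [xeq x2 e, htx2 k]
      exact (htA k).symm
  · -- t contains a `none`; let d be the first one
    have hex : ∃ d : ℕ, t d = none := by
      push_neg at hcase
      exact hcase
    set d := Nat.find hex with hdd
    have hd : t d = none := Nat.find_spec hex
    have hless : ∀ j : ℕ, j < d → t j ≠ none := fun j hj => Nat.find_min hex hj
    have hchz : ∀ j : Fin d, ∃ b : A, t (j : ℕ) = some b := by
      intro j
      cases htj : t (j : ℕ) with
      | none => exact absurd htj (hless j j.2)
      | some b => exact ⟨b, rfl⟩
    choose zf hzf using hchz
    set zl : List A := List.ofFn zf with hzl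
    have hzlen : zl.length = d := by simp [hzl]
    -- u1 ++ zl occurs in y (as a c-less word), hence is in L(X)
    have hw1 : WordAt y i ((u1 ++ zl).map some) := by
      rw [List.map_append, wordAt_append]
      refine ⟨hw, ?_⟩
      intro k hk
      have hkd : k < d := by
        simp only [hzl, List.length_map, List.length_ofFn] at hk
        exact hk
      have hval := ht k
      rw [hzf ⟨k, hkd⟩] at hval
      rw [hval]
      simp only [hzl, List.get_eq_getElem, List.getElem_map, List.getElem_ofFn]
    have hin1 : InLang X (u1 ++ zl) := by
      obtain ⟨wh, hweq, hwl⟩ := cless_lang hY hWL hXne ⟨y, hy, i, hw1⟩ (by simp)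
      rwa [map_some_inj hweq]
    -- transfer to u2 ++ zl via equality of follower sets
    obtain ⟨x3, hx3, i3, hwx3⟩ := hin1
    rw [wordAt_append] at hwx3
    have hρ : (fun k : ℕ => x3 (i3 + (u1.length : ℤ) + (k : ℤ))) ∈ Follower X u1 :=
      ⟨x3, hx3, i3, hwx3.1, fun k => rfl⟩
    rw [hf] at hρ
    obtain ⟨x4, hx4, i4, hwx4, htx4⟩ := hρ
    have hin2 : InLang X (u2 ++ zl) := by
      refine ⟨x4, hx4, i4, ?_⟩
      rw [wordAt_append]
      refine ⟨hwx4, ?_⟩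
      intro k hk
      rw [htx4 k]
      exact hwx3.2 k hk
    -- get the code word
    obtain ⟨ω, hΩ, hsuffix⟩ := hsuf (u2 ++ zl) hin2
    obtain ⟨y0, hy0⟩ := hsuffix
    obtain ⟨P, hPC, hPw⟩ := periodic_point hΩ
    -- decompose the periodic word occurrence
    rw [← hy0, List.map_append, List.map_append, List.append_assoc, List.append_assoc] at hPw
    have hs1 := wordAt_append.1 hPw
    have hs2 := wordAt_append.1 hs1.2
    have hs3 := wordAt_append.1 hs2.2
    -- hs2.1 : WordAt P (0 + |m y0|) (m u2)
    -- hs3.1 : WordAt P (0 + |m y0| + |m u2|) (m zl)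
    -- hs3.2 : WordAt P (...) [none]
    have hqnone : P ((y0.length : ℤ) + u2.length + zl.length) = none := by
      have := wordAt_singleton.1 hs3.2
      rw [← this]
      apply xeq
      simp
    have hpnone : y (i + (u1.length : ℤ) + d) = none := by
      have hval := ht d
      rw [hd] at hval
      rw [← hval]
      apply xeq
      simp
    set q : ℤ := (y0.length : ℤ) + u2.length + zl.length with hqd
    set p : ℤ := i + (u1.length : ℤ) + d with hpd
    have hPY : P ∈ Y := hY.2.1 hPC
    refine ⟨fun j => if j ≤ q then P j else y (j - q + p),
      splice_mem_Y hY hy hPY hpnone hqnone, (y0.length : ℤ), ?_, ?_⟩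
    · intro k hk
      have hk2 : k < u2.length := by simpa using hk
      show (if (y0.length : ℤ) + (k : ℤ) ≤ q then P ((y0.length : ℤ) + (k : ℤ))
        else y ((y0.length : ℤ) + (k : ℤ) - q + p)) = (u2.map some).get ⟨k, hk⟩
      rw [if_pos (by omega)]
      have := hs2.1 k hk
      rw [← this]
      apply xeq
      simp
    · intro k
      show (if (y0.length : ℤ) + ((u2.map some).length : ℤ) + (k : ℤ) ≤ q then
          P ((y0.length : ℤ) + ((u2.map some).length : ℤ) + (k : ℤ))
        else y ((y0.length : ℤ) + ((u2.map some).length : ℤ) + (k : ℤ) - q + p)) = t k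
      have hmlen2 : ((u2.map some).length : ℤ) = (u2.length : ℤ) := by simp
      rcases lt_trichotomy k d with hkd | hkd | hkd
      · rw [if_pos (by omega)]
        have hklt : k < (zl.map some).length := by
          simp only [List.length_map]; omega
        have := hs3.1 k hklt
        have e : 0 + ((y0.map some).length : ℤ) + ((u2.map some).length : ℤ) + (k : ℤ) =
            (y0.length : ℤ) + ((u2.map some).length : ℤ) + (k : ℤ) := by simp
        rw [e] at this
        rw [this]
        simp only [hzl, List.get_eq_getElem, List.getElem_map, List.getElem_ofFn]
        exact (hzf ⟨k, hkd⟩).symm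
      · rw [if_pos (by omega)]
        have e : (y0.length : ℤ) + ((u2.map some).length : ℤ) + (k : ℤ) = q := by omega
        rw [xeq P e, hqnone, hkd, hd]
      · rw [if_neg (by omega)]
        have hval := ht k
        rw [← hval]
        apply xeq
        omega

end Main4

section Main5

variable {A : Type*} [Fintype A] [TopologicalSpace A] [DiscreteTopology A]
variable {X : Set (ℤ → A)} {W : Set (List A)} {Y : Set (ℤ → Option A)}

lemma followerSets_finite {γ : Type*} [Finite γ] (S : Set (ℤ → γ)) (n : ℕ) :
    (FollowerSets S n).Finite := by
  have hsub : FollowerSets S n ⊆ (fun w => Follower S w) '' {l : List γ | l.length = n} := by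
    rintro F ⟨w, hlen, hlang, rfl⟩
    exact ⟨w, hlen, rfl⟩
  exact ((finite_lists_length_eq n).image _).subset hsub

/-- the family of follower sets of `none`-free words -/
lemma cfam_finite (hY : IsCodedSubshift ((fun w : List A => w.map some ++ [none]) '' W) Y)
    (hX : IsSubshift X) (hXne : X.Nonempty) (hWL : ∀ w ∈ W, InLang X w)
    (hsuf : ∀ v : List A, InLang X v → ∃ w ∈ W, v <:+ w) (hsofic : Sofic X) :
    {F : Set (ℕ → Option A) | ∃ u : List (Option A), (none : Option A) ∉ u ∧
      Follower Y u = F}.Finite := by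
  classical
  set Φ : Set (ℕ → A) → Set (ℕ → Option A) := fun F =>
    if h : ∃ w : List A, InLang X w ∧ Follower X w = F then
      Follower Y ((Classical.choose h).map some)
    else ∅ with hΦ
  apply Set.Finite.subset ((hsofic.image Φ).insert ∅)
  rintro F ⟨u, hu, rfl⟩
  by_cases hlang : InLang Y u
  · obtain ⟨wh, rfl, hwl⟩ := cless_lang hY hWL hXne hlang hu
    right
    refine ⟨Follower X wh, ⟨wh, hwl, rfl⟩, ?_⟩
    have hex : ∃ w : List A, InLang X w ∧ Follower X w = Follower X wh := ⟨wh, hwl, rfl⟩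
    rw [hΦ]
    simp only [dif_pos hex]
    have hch := Classical.choose_spec hex
    apply Set.Subset.antisymm
    · exact cless_transfer hY hX hXne hWL hsuf hch.2
    · exact cless_transfer hY hX hXne hWL hsuf hch.2.symm
  · left
    rw [← follower_nonempty_iff] at hlang
    exact Set.not_nonempty_iff_eq_empty.1 hlang

lemma exists_last_none : ∀ {w : List (Option A)}, (none : Option A) ∈ w →
    ∃ r v : List (Option A), w = r ++ none :: v ∧ (none : Option A) ∉ v := by
  intro w
  induction w with
  | nil => intro h; simp at h
  | cons a w' ih =>
      intro h
      by_cases h2 : (none : Option A) ∈ w'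
      · obtain ⟨r, v, rfl, hv⟩ := ih h2
        exact ⟨a :: r, v, rfl, hv⟩
      · have ha : a = none := by
          rcases List.mem_cons.1 h with h3 | h3
          · exact h3.symm
          · exact absurd h3 h2
        exact ⟨[], w', by rw [ha]; simp, h2⟩

lemma G_reduce (hY : IsCodedSubshift ((fun w : List A => w.map some ++ [none]) '' W) Y)
    {n : ℕ} (hn : 1 ≤ n) (hcard : (FollowerSets Y n).ncard ≤ n)
    {u0 : List (Option A)} (hu0len : u0.length = n) (hu0lang : InLang Y u0)
    (hu0c : (none : Option A) ∉ u0) :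
    ∀ m : ℕ, ∀ v : List (Option A), v.length = m → (none : Option A) ∉ v →
      InLang Y (none :: v) →
      (∃ v' : List (Option A), v'.length ≤ n - 1 ∧
          Follower Y (none :: v) = Follower Y (none :: v')) ∨
      (∃ u : List (Option A), (none : Option A) ∉ u ∧
          Follower Y (none :: v) = Follower Y u) := by
  intro m
  induction m using Nat.strong_induction_on with
  | _ m IH =>
    intro v hvlen hvnone hvlang
    rcases le_or_gt v.length (n - 1) with hshort | hlong
    · exact Or.inl ⟨v, hshort, rfl⟩
    have hvn : n ≤ v.length := by omega
    set g : Fin (n + 1) → Set (ℕ → Option A) := fun k =>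
      if (k : ℕ) < n then Follower Y (none :: v.take (k : ℕ)) else Follower Y u0 with hg
    have hgmem : ∀ k : Fin (n + 1), g k ∈ FollowerSets Y n := by
      intro k
      by_cases hk : (k : ℕ) < n
      · have hsplit : (none :: v.take (k : ℕ)) ++ v.drop (k : ℕ) = none :: v := by
          rw [List.cons_append, List.take_append_drop]
        have hpref : InLang Y (none :: v.take (k : ℕ)) := by
          rw [← hsplit] at hvlang
          exact inLang_append_left hvlang
        obtain ⟨r, hrlen, hrlang⟩ := inLang_pad_left (n - 1 - (k : ℕ)) hpref
        refine ⟨r ++ none :: v.take (k : ℕ), ?_, hrlang, ?_⟩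
        · simp only [List.length_append, List.length_cons, List.length_take, hrlen]
          omega
        · rw [follower_reset hY hrlang]
          simp only [hg]
          rw [if_pos hk]
      · refine ⟨u0, hu0len, hu0lang, ?_⟩
        simp only [hg]
        rw [if_neg hk]
    obtain ⟨i, j, hij, hgeq⟩ := pigeonhole (followerSets_finite Y n) hcard g hgmem
    have hijn : (i : ℕ) < (j : ℕ) := hij
    simp only [hg] at hgeq
    by_cases hjn : (j : ℕ) < n
    · have hin : (i : ℕ) < n := by omega
      rw [if_pos hin, if_pos hjn] at hgeq
      set v' : List (Option A) := v.take (i : ℕ) ++ v.drop (j : ℕ) with hv'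
      have hsplit : (none :: v.take (j : ℕ)) ++ v.drop (j : ℕ) = none :: v := by
        rw [List.cons_append, List.take_append_drop]
      have hsplit2 : (none :: v.take (i : ℕ)) ++ v.drop (j : ℕ) = none :: v' := by
        rw [List.cons_append, hv']
      have hkey : Follower Y (none :: v) = Follower Y (none :: v') := by
        rw [← hsplit, ← hsplit2]
        exact follower_congr_append hgeq.symm _
      have hv'len : v'.length < m := by
        rw [hv']
        simp only [List.length_append, List.length_take, List.length_drop]
        omega
      have hv'none : (none : Option A) ∉ v' := by
        rw [hv']
        intro hmem
        rcases List.mem_append.1 hmem with h3 | h3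
        · exact hvnone (List.take_subset _ _ h3)
        · exact hvnone (List.drop_subset _ _ h3)
      have hv'lang : InLang Y (none :: v') := by
        rw [← follower_nonempty_iff, ← hkey, follower_nonempty_iff]
        exact hvlang
      rcases IH v'.length hv'len v' rfl hv'none hv'lang with ⟨v'', h1, h2⟩ | ⟨u, h1, h2⟩
      · exact Or.inl ⟨v'', h1, hkey.trans h2⟩
      · exact Or.inr ⟨u, h1, hkey.trans h2⟩
    · have hin : (i : ℕ) < n := by
        have := j.2
        omega
      rw [if_pos hin, if_neg hjn] at hgeq
      have hsplit : (none :: v.take (i : ℕ)) ++ v.drop (i : ℕ) = none :: v := by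
        rw [List.cons_append, List.take_append_drop]
      have hkey : Follower Y (none :: v) = Follower Y (u0 ++ v.drop (i : ℕ)) := by
        rw [← hsplit]
        exact follower_congr_append hgeq _
      refine Or.inr ⟨u0 ++ v.drop (i : ℕ), ?_, hkey⟩
      intro hmem
      rcases List.mem_append.1 hmem with h3 | h3
      · exact hu0c h3
      · exact hvnone (List.drop_subset _ _ h3)

end Main5

end CodedProof

open CodedProof in
/-- Let `X` be a sofic subshift, `W ⊆ L(X)` such that every word of `L(X)` is a suffix
of some element of `W`, and let `Y` be the coded subshift with code words
`{wc : w ∈ W}` where `c` is a new letter (modelled by `none : Option A`).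
If `|F_Y(n)| ≤ n` for some `n ≥ 1`, then `Y` is sofic. -/
theorem coded_sofic_of_followerSets_card_le {A : Type*} [Fintype A] [TopologicalSpace A]
    [DiscreteTopology A] (X : Set (ℤ → A)) (hX : IsSubshift X) (hsofic : Sofic X)
    (W : Set (List A)) (hWL : ∀ w ∈ W, InLang X w)
    (hsuf : ∀ v : List A, InLang X v → ∃ w ∈ W, v <:+ w)
    (Y : Set (ℤ → Option A))
    (hY : IsCodedSubshift ((fun w : List A => w.map some ++ [none]) '' W) Y)
    (n : ℕ) (hn : 1 ≤ n) (h : (FollowerSets Y n).ncard ≤ n) :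
    Sofic Y := by
  classical
  by_cases hXne : X.Nonempty
  · obtain ⟨x0, hx0⟩ := hXne
    set u0 : List (Option A) := (List.ofFn (fun k : Fin n => x0 ((k : ℕ) : ℤ))).map some with hu0
    have hu0len : u0.length = n := by simp [hu0]
    have hu0c : (none : Option A) ∉ u0 := by simp [hu0, List.mem_ofFn, Function.comp]
    have hu0lang : InLang Y u0 := by
      refine ⟨fun i => some (x0 i), X_subset_Y hY hsuf hx0, 0, ?_⟩
      intro k hk
      show some (x0 (0 + (k : ℤ))) = u0.get ⟨k, hk⟩
      simp only [hu0, List.get_eq_getElem, List.getElem_map, List.getElem_ofFn]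
      congr 1
      apply xeq
      omega
    have hfam : {F | ∃ w : List (Option A), InLang Y w ∧ Follower Y w = F} ⊆
        ({F : Set (ℕ → Option A) | ∃ u : List (Option A), (none : Option A) ∉ u ∧
            Follower Y u = F}
          ∪ (fun v' : List (Option A) => Follower Y (none :: v')) ''
              {l : List (Option A) | l.length ≤ n - 1}) := by
      rintro F ⟨w, hwlang, rfl⟩
      by_cases hcw : (none : Option A) ∈ w
      · obtain ⟨r, v, rfl, hv⟩ := exists_last_none hcw
        have hreset := follower_reset hY hwlang
        have hvlang : InLang Y (none :: v) := inLang_append_right hwlang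
        rcases G_reduce hY hn h hu0len hu0lang hu0c v.length v rfl hv hvlang with
          ⟨v', h1, h2⟩ | ⟨u, h1, h2⟩
        · right
          exact ⟨v', h1, (hreset.trans h2).symm⟩
        · left
          exact ⟨u, h1, (hreset.trans h2).symm⟩
      · left
        exact ⟨w, hcw, rfl⟩
    apply Set.Finite.subset _ hfam
    exact Set.Finite.union (cfam_finite hY hX ⟨x0, hx0⟩ hWL hsuf hsofic)
      ((finite_lists_length_le (n - 1)).image _)
  · have hCP : {x : ℤ → Option A |
        ConcatPoint ((fun w : List A => w.map some ++ [none]) '' W) x} = ∅ := by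
      ext x
      simp only [Set.mem_setOf_eq, Set.mem_empty_iff_false, iff_false]
      rintro ⟨f, -, -, hblk⟩
      obtain ⟨w, hw, -, -⟩ := hblk 0
      obtain ⟨ω, hΩ, -⟩ := hw
      obtain ⟨x', hx', -⟩ := hWL ω hΩ
      exact hXne ⟨x', hx'⟩
    have hYsub : Y ⊆ (∅ : Set (ℤ → Option A)) := by
      apply hY.2.2
      · exact ⟨isClosed_empty, by simp⟩
      · rw [hCP]
    have hempty : {F | ∃ w : List (Option A), InLang Y w ∧ Follower Y w = F} = ∅ := by
      ext F
      simp only [Set.mem_setOf_eq, Set.mem_empty_iff_false, iff_false]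
      rintro ⟨w, ⟨x, hx, -⟩, -⟩
      exact hYsub hx
    show {F | ∃ w : List (Option A), InLang Y w ∧ Follower Y w = F}.Finite
    rw [hempty]
    exact Set.finite_empty
end

section
/- Let X be a subshift over a finite alphabet A, let 𝒲 ⊆ L(X) be a set of words such that every finite word v ∈ L(X) is a suffix of some w ∈ 𝒲, let c be a letter not in A, and let Y be the coded subshift over the alphabet A ∪ {c} with code words {wc : w ∈ 𝒲}. Then X ⊆ Y (identifying A^ℤ with a subset of (A ∪ {c})^ℤ), and every word in L(Y) not containing the letter c belongs to L(X). -/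
private lemma exists_map_some' {A : Type*} (u : List (Option A)) (hu : none ∉ u) :
    ∃ v : List A, u = v.map some := by
  induction u with
  | nil => exact ⟨[], rfl⟩
  | cons a t ih =>
    obtain ⟨v, hv⟩ := ih (fun h => hu (List.mem_cons_of_mem _ h))
    cases a with
    | none => exact absurd List.mem_cons_self hu
    | some b => exact ⟨b :: v, by simp [hv]⟩

private lemma isOpen_wordAt' {B : Type*} [TopologicalSpace B] [DiscreteTopology B]
    (i : ℤ) (w : List B) : IsOpen {z : ℤ → B | WordAt z i w} := by
  have h : {z : ℤ → B | WordAt z i w} =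
      ⋂ k : Fin w.length, (fun z : ℤ → B => z (i + (k : ℕ))) ⁻¹' {w.get k} := by
    ext z
    simp only [Set.mem_iInter, Set.mem_preimage, Set.mem_singleton_iff, Set.mem_setOf_eq]
    constructor
    · intro h k; exact h k k.2
    · intro h k hk; exact h ⟨k, hk⟩
  rw [h]
  exact isOpen_iInter_of_finite fun k =>
    (continuous_apply (i + (k:ℕ))).isOpen_preimage _ (isOpen_discrete _)

/-- For the coded subshift `Y` built from `X`, `W` and a new letter `c = none`:
`X ⊆ Y` (under the natural identification), and every word of `L(Y)` not containing
`c` belongs to `L(X)`. -/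
theorem coded_contains_and_language {A : Type*} [Fintype A] [TopologicalSpace A]
    [DiscreteTopology A] (X : Set (ℤ → A)) (hX : IsSubshift X)
    (W : Set (List A)) (hWL : ∀ w ∈ W, InLang X w)
    (hsuf : ∀ v : List A, InLang X v → ∃ w ∈ W, v <:+ w)
    (Y : Set (ℤ → Option A))
    (hY : IsCodedSubshift ((fun w : List A => w.map some ++ [none]) '' W) Y) :
    ((fun x : ℤ → A => fun i => some (x i)) '' X ⊆ Y) ∧
    (∀ u : List (Option A), InLang Y u → none ∉ u →
      ∃ v : List A, u = v.map some ∧ InLang X v) := by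
  classical
  obtain ⟨⟨hYclosed, hYshift⟩, hYconc, hYmin⟩ := hY
  set W' : Set (List (Option A)) := (fun w : List A => w.map some ++ [none]) '' W with hW'
  -- the comparison subshift Z
  set Z : Set (ℤ → Option A) :=
    {y | ∀ i : ℤ, ∀ v : List A, WordAt y i (v.map some) → InLang X v} with hZdef
  have hZclosed : IsClosed Z := by
    rw [← isOpen_compl_iff]
    have h : Zᶜ = ⋃ i : ℤ, ⋃ v : List A, ⋃ _ : ¬ InLang X v,
        {z : ℤ → Option A | WordAt z i (v.map some)} := by
      ext z
      simp only [Set.mem_compl_iff, hZdef, Set.mem_setOf_eq, Set.mem_iUnion]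
      push_neg
      constructor
      · rintro ⟨i, v, h1, h2⟩; exact ⟨i, v, h2, h1⟩
      · rintro ⟨i, v, h2, h1⟩; exact ⟨i, v, h1, h2⟩
    rw [h]
    exact isOpen_iUnion fun i => isOpen_iUnion fun v => isOpen_iUnion fun _ =>
      isOpen_wordAt' i (v.map some)
  have hZshift : (fun x : ℤ → Option A => fun i => x (i + 1)) '' Z = Z := by
    apply Set.Subset.antisymm
    · rintro _ ⟨y, hy, rfl⟩ i v hv
      apply hy (i + 1) v
      intro k hk
      have := hv k hk
      simp only at this ⊢
      rw [show i + 1 + (k : ℤ) = i + k + 1 by ring]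
      exact this
    · intro y hy
      refine ⟨fun i => y (i - 1), ?_, ?_⟩
      · intro i v hv
        apply hy (i - 1) v
        intro k hk
        have := hv k hk
        simp only at this ⊢
        rw [show i - 1 + (k : ℤ) = i + k - 1 by ring]
        exact this
      · funext i; simp
  have hZconc : {x : ℤ → Option A | ConcatPoint W' x} ⊆ Z := by
    rintro y ⟨f, hmono, hcover, hblocks⟩ i v hv
    -- a point of X exists
    obtain ⟨w₀', hw₀'W, -, -⟩ := hblocks 0
    obtain ⟨w₀, hw₀W, -⟩ := hw₀'W
    obtain ⟨x₀, hx₀, -⟩ := hWL w₀ hw₀W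
    rcases eq_or_ne v [] with rfl | hvne
    · exact ⟨x₀, hx₀, 0, fun k hk => absurd hk (by simp)⟩
    obtain ⟨n, hn1, hn2⟩ := hcover i
    obtain ⟨w', hw'W, hw'len, hw'at⟩ := hblocks n
    obtain ⟨w, hwW, rfl⟩ := hw'W
    simp only [List.length_append, List.length_map, List.length_singleton] at hw'len
    have hfn1 : f (n + 1) = f n + (w.length : ℤ) + 1 := by push_cast at hw'len; omega
    have hvlen : 0 < v.length := List.length_pos_iff.mpr hvne
    -- the occurrence of v lies inside the block w
    have hend : i + (v.length : ℤ) ≤ f n + (w.length : ℤ) := by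
      by_contra hcon
      push_neg at hcon
      set k : ℕ := (f n + (w.length : ℤ) - i).toNat with hk
      have hkz : (k : ℤ) = f n + (w.length : ℤ) - i := by omega
      have hklt : k < v.length := by omega
      have h1 := hv k (by simpa using hklt)
      have h2 := hw'at w.length (by simp)
      have hidx : i + (k : ℤ) = f n + (w.length : ℤ) := by omega
      rw [hidx] at h1
      rw [h2] at h1
      have : (w.map some ++ [none]).get ⟨w.length, by simp⟩ = none := by
        simp
      rw [this] at h1
      simp at h1
    set d : ℕ := (i - f n).toNat with hd
    have hdz : (d : ℤ) = i - f n := by omega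
    obtain ⟨x, hx, j, hxw⟩ := hWL w hwW
    refine ⟨x, hx, j + (d : ℤ), fun k hk => ?_⟩
    have hdk : d + k < w.length := by omega
    have h1 := hv k (by simpa using hk)
    have h2 := hw'at (d + k) (by simp; omega)
    have hidx : f n + ((d + k : ℕ) : ℤ) = i + (k : ℤ) := by push_cast; omega
    rw [hidx] at h2
    have hg1 : (v.map some).get ⟨k, by simpa using hk⟩ = some (v.get ⟨k, hk⟩) := by
      simp
    have hg2 : (w.map some ++ [none]).get ⟨d + k, by simp; omega⟩
        = some (w.get ⟨d + k, hdk⟩) := by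
      simp only [List.get_eq_getElem]
      rw [List.getElem_append_left (show d + k < (w.map some).length by simpa using hdk)]
      simp
    rw [h1, hg1] at h2
    rw [hg2] at h2
    have h3 := hxw (d + k) hdk
    have : x (j + (d : ℤ) + (k : ℤ)) = w.get ⟨d + k, hdk⟩ := by
      rw [show j + (d : ℤ) + (k : ℤ) = j + ((d + k : ℕ) : ℤ) by push_cast; ring]
      exact h3
    rw [this]
    exact (Option.some_injective A h2).symm
  have hYZ : Y ⊆ Z := hYmin Z ⟨hZclosed, hZshift⟩ hZconc
  constructor
  · -- Part 1 : X ⊆ Y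
    rintro _ ⟨x, hx, rfl⟩
    have hS : ∀ N : ℕ, ∃ z : ℤ → Option A, ConcatPoint W' z ∧
        ∀ i : ℤ, -(N : ℤ) ≤ i → i ≤ (N : ℤ) → z i = some (x i) := by
      intro N
      set vN : List A := List.ofFn (fun j : Fin (2*N+1) => x (-(N:ℤ) + (j : ℕ))) with hvN
      have hvlen : vN.length = 2*N+1 := by simp [hvN]
      have hvL : InLang X vN := by
        refine ⟨x, hx, -(N:ℤ), fun k hk => ?_⟩
        simp only [hvN, List.get_eq_getElem, List.getElem_ofFn]
      obtain ⟨w, hwW, u, hu⟩ := hsuf vN hvL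
      have hmlen : w.length = u.length + (2*N+1) := by
        rw [← hu]; simp [hvlen]
      set m : ℕ := w.length with hm
      set ww : List (Option A) := w.map some ++ [none] with hww
      have hwwlen : ww.length = m + 1 := by simp [hww, hm]
      set p : ℤ := (m : ℤ) + 1 with hpdef
      have hp : 0 < p := by positivity
      set s : ℤ := (N : ℤ) + 1 - m with hs
      set z : ℤ → Option A := fun i => ww.getD ((i - s) % p).toNat none with hz
      refine ⟨z, ⟨fun n => s + n * p, ?_, ?_, ?_⟩, ?_⟩
      · intro a b hab
        simp only
        exact add_lt_add_right (mul_lt_mul_of_pos_right hab hp) s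
      · intro i
        refine ⟨(i - s) / p, ?_, ?_⟩
        · have h1 : p * ((i - s) / p) + (i - s) % p = i - s := Int.mul_ediv_add_emod _ _
          have h2 : 0 ≤ (i - s) % p := Int.emod_nonneg _ (ne_of_gt hp)
          have h3 : ((i - s) / p) * p = p * ((i - s) / p) := mul_comm _ _
          simp only
          linarith
        · have h1 : p * ((i - s) / p) + (i - s) % p = i - s := Int.mul_ediv_add_emod _ _
          have h3 : (i - s) % p < p := Int.emod_lt_of_pos _ hp
          have h4 : ((i - s) / p + 1) * p = p * ((i - s) / p) + p := by ring
          simp only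
          linarith
      · intro n
        refine ⟨ww, ⟨w, hwW, rfl⟩, ?_, ?_⟩
        · rw [hwwlen]; push_cast; ring
        · intro k hk
          have hkp : (k : ℤ) < p := by
            rw [hwwlen] at hk; omega
          have hmod : (s + n * p + (k : ℤ) - s) % p = (k : ℤ) := by
            rw [show s + n * p + (k : ℤ) - s = (k : ℤ) + p * n by ring,
              Int.add_mul_emod_self_left, Int.emod_eq_of_lt (by positivity) hkp]
          simp only [hz, hmod]
          rw [show ((k : ℤ)).toNat = k from Int.toNat_natCast k,
            List.getD_eq_getElem ww none hk]
          simp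
      · intro i hi1 hi2
        have h0 : 0 ≤ i - s := by omega
        have hlt : i - s < p := by omega
        have hmod : (i - s) % p = i - s := Int.emod_eq_of_lt h0 hlt
        set t : ℕ := (i - s).toNat with ht
        have htz : (t : ℤ) = i - s := by omega
        have htm : t < m := by omega
        have htw : t < ww.length := by omega
        simp only [hz, hmod]
        rw [← ht, List.getD_eq_getElem ww none htw]
        have hul : u.length ≤ t := by omega
        have e1 : ww[t] = (w.map some)[t]'(by simpa using htm) :=
          List.getElem_append_left (by simpa using htm)
        have e2 : (w.map some)[t]'(by simpa using htm) = some (w[t]'htm) := by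
          simp
        have e3 : w[t]'htm = vN[t - u.length]'(by omega) := by
          have : (u ++ vN)[t]'(by rw [hu]; omega) = vN[t - u.length]'(by
            simp [hvlen]; omega) := List.getElem_append_right hul
          simp only [hu] at this
          exact this
        have e4 : vN[t - u.length]'(by omega) = x (-(N:ℤ) + ((t - u.length : ℕ) : ℤ)) := by
          simp only [hvN, List.getElem_ofFn]
        have e5 : -(N:ℤ) + ((t - u.length : ℕ) : ℤ) = i := by omega
        rw [e1, e2, e3, e4, e5]
    choose zs hzsC hzs using hS
    have hzsY : ∀ N, zs N ∈ Y := fun N => hYconc (hzsC N)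
    have htend : Filter.Tendsto zs Filter.atTop (nhds (fun i => some (x i))) := by
      rw [tendsto_pi_nhds]
      intro i
      have hev : ∀ᶠ N in Filter.atTop, zs N i = some (x i) :=
        Filter.eventually_atTop.2 ⟨i.natAbs, fun N hN => hzs N i (by omega) (by omega)⟩
      exact Filter.Tendsto.congr' (Filter.EventuallyEq.symm hev) tendsto_const_nhds
    exact hYclosed.mem_of_tendsto htend (Filter.Eventually.of_forall hzsY)
  · intro u hu hnone
    obtain ⟨v, rfl⟩ := exists_map_some' u hnone
    obtain ⟨y, hyY, i, hyw⟩ := hu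
    exact ⟨v, rfl, hYZ hyY i v hyw⟩
end
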